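/- arXiv:2205.04069 — 9 statements merged into one kernel-verified Lean document; each statement's English description precedes it below -/
import Mathlib

section
/- Let X be an ultra-log-concave random variable taking values in the nonnegative integers whose mean λ = E[X] is a (finite) nonnegative integer. Then P(X = λ) ≥ e^{-λ} λ^λ / λ!, i.e., P(X = E X) ≥ P(Z = E X) where Z is a Poisson random variable with parameter λ = E X (with the convention 0^0 = 1). -/
/-!
Write `q n = n! * P(X = n)`. Log-concavity makes the ratio `q (n + 1) / q n` nonincreasing, so
with `ν = q (λ + 1) / q λ` the sequence `q n / ν ^ n` peaks at `n = λ`, i.e.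
`P(X = n) ≤ q λ * ν ^ (n - λ) / n!`. Since `E X = λ`, Jensen gives `E[β ^ (X - λ)] ≥ 1` for
every `β > 0`; for `β = λ / ν` the bound sums to `q λ * λ ^ (-λ) * e ^ λ`, which is the claim.
If `X` has no mass above `λ` (or `λ = 0`), the mean forces `X = λ` almost surely.
-/

open MeasureTheory Real
open scoped Nat

theorem hasSum_measureReal_preimage_singleton_smul {Ω α E : Type*} [MeasurableSpace Ω]
    {P : Measure Ω} [MeasurableSpace α] [Countable α] [MeasurableSingletonClass α]
    [NormedAddCommGroup E] [NormedSpace ℝ E] [CompleteSpace E] {X : Ω → α} (hX : Measurable X)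
    {f : α → E} (hf : Integrable (fun ω => f (X ω)) P) :
    HasSum (fun a => P.real (X ⁻¹' {a}) • f a) (∫ ω, f (X ω) ∂P) := by
  have hf' : Integrable f (P.map X) :=
    (integrable_map_measure (.of_discrete) hX.aemeasurable).2 hf
  rw [← Measure.sum_smul_dirac (P.map X)] at hf'
  have := hasSum_integral_measure hf'
  rw [Measure.sum_smul_dirac, integral_map hX.aemeasurable .of_discrete] at this
  simpa [integral_smul_measure, integral_dirac, ← measureReal_def,
    map_measureReal_apply hX (measurableSet_singleton _)] using this

theorem Nat.apply_le_of_unimodal {α : Type*} [Preorder α] {g : ℕ → α} {m : ℕ}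
    (hup : ∀ k < m, g k ≤ g (k + 1)) (hdown : ∀ k ≥ m, g (k + 1) ≤ g k) (n : ℕ) :
    g n ≤ g m := by
  rcases le_total n m with hnm | hmn
  · induction hnm using Nat.decreasingInduction with
    | self => exact le_rfl
    | of_succ k hk ih => exact (hup k hk).trans ih
  · induction n, hmn using Nat.le_induction with
    | base => exact le_rfl
    | succ k hk ih => exact (hdown k hk).trans ih

/-- `q (b + 1) / q b ≤ q (a + 1) / q a`, cross-multiplied so that it also holds where `q`
vanishes. -/
theorem ratio_antitone_of_logConcave {q : ℕ → ℝ} (hq : ∀ n, 0 ≤ q n)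
    (hsupp : Set.OrdConnected {n | 0 < q n}) (hlc : ∀ n, q n * q (n + 2) ≤ q (n + 1) ^ 2)
    {a b : ℕ} (hab : a ≤ b) : q a * q (b + 1) ≤ q (a + 1) * q b := by
  induction b, hab using Nat.le_induction with
  | base => rw [mul_comm]
  | succ b hab ih =>
    rcases (mul_nonneg (hq a) (hq (b + 2))).eq_or_lt with h0 | hpos
    · rw [← h0]; exact mul_nonneg (hq _) (hq _)
    have hb1 : 0 < q (b + 1) := hsupp.out (pos_of_mul_pos_left hpos (hq _))
      (pos_of_mul_pos_right hpos (hq a)) ⟨by omega, by omega⟩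
    refine le_of_mul_le_mul_right ?_ hb1
    calc q a * q (b + 2) * q (b + 1) = q (b + 2) * (q a * q (b + 1)) := by ring
      _ ≤ q (b + 2) * (q (a + 1) * q b) := mul_le_mul_of_nonneg_left ih (hq _)
      _ = q (a + 1) * (q b * q (b + 2)) := by ring
      _ ≤ q (a + 1) * q (b + 1) ^ 2 := mul_le_mul_of_nonneg_left (hlc b) (hq _)
      _ = q (a + 1) * q (b + 1) * q (b + 1) := by ring

theorem div_pow_le_of_logConcave {q : ℕ → ℝ} (hq : ∀ n, 0 ≤ q n)
    (hsupp : Set.OrdConnected {n | 0 < q n}) (hlc : ∀ n, q n * q (n + 2) ≤ q (n + 1) ^ 2)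
    {m : ℕ} {ν : ℝ} (hm : 0 < q m) (hν : 0 < ν) (hνm : q (m + 1) = ν * q m) (n : ℕ) :
    q n / ν ^ n ≤ q m / ν ^ m := by
  refine Nat.apply_le_of_unimodal (g := fun n => q n / ν ^ n) (fun k hk => ?_) (fun k hk => ?_) n
  · have h := ratio_antitone_of_logConcave hq hsupp hlc hk.le
    rw [hνm] at h
    have : q k * ν ≤ q (k + 1) := le_of_mul_le_mul_right (by linarith) hm
    rw [pow_succ, div_le_div_iff₀ (by positivity) (by positivity)]
    calc q k * (ν ^ k * ν) = q k * ν * ν ^ k := by ring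
      _ ≤ q (k + 1) * ν ^ k := by gcongr
  · have h := ratio_antitone_of_logConcave hq hsupp hlc hk
    rw [hνm] at h
    have : q (k + 1) ≤ ν * q k := le_of_mul_le_mul_left (by linarith) hm
    rw [pow_succ, div_le_div_iff₀ (by positivity) (by positivity)]
    calc q (k + 1) * ν ^ k ≤ ν * q k * ν ^ k := by gcongr
      _ = q k * (ν ^ k * ν) := by ring

theorem one_le_of_hasSum_mul_exp_le {ι : Type*} {p x f : ι → ℝ} {m s : ℝ} (θ : ℝ)
    (hp : ∀ i, 0 ≤ p i) (h1 : HasSum p 1) (hm : HasSum (fun i => x i * p i) m)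
    (hf : ∀ i, p i * exp (θ * (x i - m)) ≤ f i) (hs : HasSum f s) : 1 ≤ s := by
  have hlin : HasSum (fun i => p i * (1 + θ * (x i - m))) 1 := by
    convert h1.add ((hm.sub (h1.mul_left m)).mul_left θ) using 1
    · ext i; ring
    · ring
  refine hasSum_le (fun i => ?_) hlin hs
  calc p i * (1 + θ * (x i - m)) ≤ p i * exp (θ * (x i - m)) :=
        mul_le_mul_of_nonneg_left (by linarith [add_one_le_exp (θ * (x i - m))]) (hp i)
    _ ≤ f i := hf i

theorem eq_one_of_hasSum_mean_of_one_sided {p : ℕ → ℝ} {m : ℕ} (hp : ∀ n, 0 ≤ p n)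
    (h1 : HasSum p 1) (hm : HasSum (fun n : ℕ => (n : ℝ) * p n) m)
    (hside : (∀ n < m, p n = 0) ∨ (∀ n > m, p n = 0)) : p m = 1 := by
  have hcentered : HasSum (fun n : ℕ => ((n : ℝ) - m) * p n) 0 := by
    simpa [sub_mul] using hm.sub (h1.mul_left (m : ℝ))
  have hzero : ∀ n : ℕ, ((n : ℝ) - m) * p n = 0 := by
    rcases hside with h | h
    · refine congrFun ((hasSum_zero_iff_of_nonneg fun n => ?_).1 hcentered)
      rcases lt_or_ge n m with hn | hn
      · simp [h n hn]
      · exact mul_nonneg (sub_nonneg.2 (by exact_mod_cast hn)) (hp n)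
    · have hneg : HasSum (fun n : ℕ => ((m : ℝ) - n) * p n) 0 := by
        simpa only [← neg_mul, neg_sub, neg_zero] using hcentered.neg
      intro n
      rw [← neg_sub, neg_mul, neg_eq_zero]
      refine congrFun ((hasSum_zero_iff_of_nonneg fun n => ?_).1 hneg) n
      rcases le_or_gt n m with hn | hn
      · exact mul_nonneg (sub_nonneg.2 (by exact_mod_cast hn)) (hp n)
      · simp [h n hn]
  have hsingle : ∀ n ≠ m, p n = 0 := fun n hn =>
    (mul_eq_zero.1 (hzero n)).resolve_left (sub_ne_zero.2 (by exact_mod_cast hn))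
  exact (hasSum_single m hsingle).unique h1

theorem pos_of_hasSum_mean {p : ℕ → ℝ} {m : ℕ} (hp : ∀ n, 0 ≤ p n)
    (h1 : HasSum p 1) (hm : HasSum (fun n : ℕ => (n : ℝ) * p n) m)
    (hsupp : Set.OrdConnected {n | 0 < p n}) : 0 < p m := by
  by_contra hpm
  have hpm0 : p m = 0 := le_antisymm (not_lt.1 hpm) (hp m)
  suffices hside : (∀ n < m, p n = 0) ∨ (∀ n > m, p n = 0) by
    linarith [eq_one_of_hasSum_mean_of_one_sided hp h1 hm hside]
  by_contra! h
  obtain ⟨⟨i, hi, hpi⟩, ⟨k, hk, hpk⟩⟩ := h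
  exact hpm (hsupp.out ((hp i).lt_of_ne' hpi) ((hp k).lt_of_ne' hpk) ⟨hi.le, hk.le⟩)

theorem poisson_le_of_logConcave_of_pos {p : ℕ → ℝ} {m : ℕ} (hp : ∀ n, 0 ≤ p n)
    (h1 : HasSum p 1) (hm : HasSum (fun n : ℕ => (n : ℝ) * p n) m)
    (hsupp : Set.OrdConnected {n | 0 < p n})
    (hlc : ∀ n, n ! * p n * ((n + 2)! * p (n + 2)) ≤ ((n + 1)! * p (n + 1)) ^ 2)
    (hm0 : 0 < m) (hpm : 0 < p m) (hpm1 : 0 < p (m + 1)) :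
    exp (-m) * (m : ℝ) ^ m / m ! ≤ p m := by
  set q : ℕ → ℝ := fun n => n ! * p n
  have hq : ∀ n, 0 ≤ q n := fun n => mul_nonneg (by positivity) (hp n)
  have hqsupp : Set.OrdConnected {n | 0 < q n} := by
    simpa [q, mul_pos_iff_of_pos_left (Nat.cast_pos.2 (Nat.factorial_pos _))] using hsupp
  have hqm : 0 < q m := mul_pos (by positivity) hpm
  set ν := q (m + 1) / q m
  have hν : 0 < ν := div_pos (mul_pos (by positivity) hpm1) hqm
  have hdom := div_pow_le_of_logConcave hq hqsupp hlc hqm hν (div_mul_cancel₀ _ hqm.ne').symm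
  set β := (m : ℝ) / ν
  have hβ : 0 < β := by positivity
  have key : ∀ n : ℕ, p n * exp (log β * (n - m)) ≤ q m / m ^ m * (m ^ n / n !) := by
    intro n
    rw [← rpow_def_of_pos hβ, rpow_sub hβ, rpow_natCast, rpow_natCast]
    calc p n * (β ^ n / β ^ m) = q n / ν ^ n * (m ^ n / n ! * (ν ^ m / m ^ m)) := by
          simp only [q, β, div_pow]; field_simp
      _ ≤ q m / ν ^ m * (m ^ n / n ! * (ν ^ m / m ^ m)) :=
          mul_le_mul_of_nonneg_right (hdom n) (by positivity)
      _ = q m / m ^ m * (m ^ n / n !) := by field_simp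
  have hexp : HasSum (fun n : ℕ => q m / m ^ m * (m ^ n / n !)) (q m / m ^ m * exp m) := by
    rw [exp_eq_exp_ℝ]
    exact (NormedSpace.expSeries_div_hasSum_exp (m : ℝ)).mul_left _
  have := one_le_of_hasSum_mul_exp_le _ hp h1 hm key hexp
  have hmpow : (0 : ℝ) < m ^ m := by positivity
  rw [div_mul_eq_mul_div, le_div_iff₀ hmpow, one_mul] at this
  rw [div_le_iff₀ (by positivity), exp_neg, inv_mul_le_iff₀ (exp_pos _)]
  simpa [q, mul_comm] using this

theorem poisson_le_of_ultraLogConcave {p : ℕ → ℝ} {m : ℕ} (hp : ∀ n, 0 ≤ p n)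
    (h1 : HasSum p 1) (hm : HasSum (fun n : ℕ => (n : ℝ) * p n) m)
    (hsupp : Set.OrdConnected {n | 0 < p n})
    (hlc : ∀ n, n ! * p n * ((n + 2)! * p (n + 2)) ≤ ((n + 1)! * p (n + 1)) ^ 2) :
    exp (-m) * (m : ℝ) ^ m / m ! ≤ p m := by
  have hpm := pos_of_hasSum_mean hp h1 hm hsupp
  by_cases hdeg : m = 0 ∨ p (m + 1) = 0
  · have hside : (∀ n < m, p n = 0) ∨ (∀ n > m, p n = 0) := by
      refine hdeg.imp (fun h n hn => absurd hn (by omega)) (fun h n hn => ?_)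
      by_contra hn0
      exact (hsupp.out hpm ((hp n).lt_of_ne' hn0) ⟨by omega, hn⟩ : 0 < p (m + 1)).ne' h
    rw [eq_one_of_hasSum_mean_of_one_sided hp h1 hm hside]
    simpa using (ProbabilityTheory.poissonMeasure_real_singleton m m).symm.trans_le
      measureReal_le_one
  · rw [not_or] at hdeg
    exact poisson_le_of_logConcave_of_pos hp h1 hm hsupp hlc (Nat.pos_of_ne_zero hdeg.1) hpm
      ((hp _).lt_of_ne' hdeg.2)

/-- If `X` is an ultra-log-concave random variable with values in the
nonnegative integers (i.e. the sequence `n ↦ n! · P(X = n)` is log-concave: its support is a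
discrete interval and the quadratic inequality holds), and the mean `E X` is a nonnegative
integer `lam`, then `P(X = lam) ≥ e^{-lam} · lam^lam / lam!`, i.e. `P(X = E X)` is at least the
corresponding Poisson probability. -/
theorem ulc_prob_at_mean_ge_poisson
    {Ω : Type*} [MeasureSpace Ω] [IsProbabilityMeasure (volume : Measure Ω)]
    (X : Ω → ℕ) (hX : Measurable X)
    (μ : ℕ → ℝ) (hμ : ∀ n, μ n = ((volume : Measure Ω) (X ⁻¹' {n})).toReal)
    (hsupp : ∀ i j k : ℕ, i ≤ j → j ≤ k → 0 < μ i → 0 < μ k → 0 < μ j)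
    (hulc : ∀ n : ℕ, 1 ≤ n →
      ((n + 1).factorial : ℝ) * μ (n + 1) * (((n - 1).factorial : ℝ) * μ (n - 1)) ≤
        ((n.factorial : ℝ) * μ n) ^ 2)
    (hint : Integrable (fun ω => (X ω : ℝ)) (volume : Measure Ω))
    (lam : ℕ) (hmean : ∫ ω, (X ω : ℝ) ∂(volume : Measure Ω) = (lam : ℝ)) :
    Real.exp (-(lam : ℝ)) * (lam : ℝ) ^ lam / (lam.factorial : ℝ) ≤ μ lam := by
  have h1 := hasSum_measureReal_preimage_singleton_smul (P := volume) hX (f := fun _ => (1 : ℝ))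
    (integrable_const _)
  have hm := hasSum_measureReal_preimage_singleton_smul hX hint
  simp only [smul_eq_mul, mul_one, integral_const, hmean, measureReal_def,
    ← hμ, measure_univ, ENNReal.toReal_one] at h1 hm
  refine poisson_le_of_ultraLogConcave (fun n => (hμ n).symm ▸ ENNReal.toReal_nonneg) h1 ?_
    ⟨fun i hi k hk j hj => hsupp i j k hj.1 hj.2 hi hk⟩ fun n => ?_
  · simpa only [mul_comm] using hm
  · simpa [mul_comm] using hulc (n + 1) (by omega)
end

section
/- Let I = {0,1,…,m} be a finite discrete interval, let L_I ⊆ ℝ^{|I|} denote the set of all log-concave sequences indexed by I, let v_1,…,v_d ∈ ℝ^{|I|} and a_1,…,a_d ∈ ℝ, and let P_d(a,v) = {p ∈ [0,∞)^{|I|} : ⟨p, v_i⟩ = a_i for i = 1,…,d}. Assume P_d(a,v) is bounded and L_I ∩ P_d(a,v) is nonempty. Then for every convex continuous functional Φ : ℝ^{|I|} → ℝ, the supremum of Φ over L_I ∩ P_d(a,v) is attained at some sequence p ∈ L_I ∩ P_d(a,v) having at most d degrees of freedom (i.e., p does not have d+1 degrees of freedom). -/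
/-- A sequence `p : {0,…,m} → ℝ` of nonnegative reals is log-concave if its support is a
discrete interval and `p n ^ 2 ≥ p (n+1) * p (n-1)` for all interior indices `n`. -/
def IsLogConcaveSeq {m : ℕ} (p : Fin (m + 1) → ℝ) : Prop :=
  (∀ n, 0 ≤ p n) ∧
  (∀ i j k : Fin (m + 1), i ≤ j → j ≤ k → 0 < p i → 0 < p k → 0 < p j) ∧
  ∀ n : ℕ, ∀ _h1 : 1 ≤ n, ∀ _h2 : n + 1 ≤ m,
    p ⟨n + 1, by omega⟩ * p ⟨n - 1, by omega⟩ ≤ p ⟨n, by omega⟩ ^ 2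

/-- A log-concave sequence `p` has `d` degrees of freedom if there exist linearly independent
sequences `q 1, …, q d`, each supported in the support of `p`, and `ε > 0`, such that for
all `δ i ∈ (-ε, ε)` the perturbed sequence `p + ∑ i, δ i • q i` is log-concave. -/
def HasDegreesOfFreedom {m : ℕ} (p : Fin (m + 1) → ℝ) (d : ℕ) : Prop :=
  ∃ (q : Fin d → Fin (m + 1) → ℝ) (ε : ℝ), 0 < ε ∧ LinearIndependent ℝ q ∧
    (∀ i n, q i n ≠ 0 → p n ≠ 0) ∧
    ∀ δ : Fin d → ℝ, (∀ i, |δ i| < ε) →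
      IsLogConcaveSeq (fun n => p n + ∑ i, δ i * q i n)

/-- The polytope `P_d(a, v) = {p ∈ [0,∞)^{|I|} : ⟨p, v i⟩ = a i, i = 1,…,d}`. -/
def polytopeP (m d : ℕ) (v : Fin d → Fin (m + 1) → ℝ) (a : Fin d → ℝ) :
    Set (Fin (m + 1) → ℝ) :=
  {p | (∀ n, 0 ≤ p n) ∧ ∀ i, ∑ n, p n * v i n = a i}

/-!
The log-concave sequences form a closed set, so `L_I ∩ P_d(a, v)` is compact, and by the
Krein–Milman lemma the (compact) set of maximisers of `Φ` on it has an extreme point `p`; by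
convexity of `Φ`, `p` is also an extreme point of `L_I ∩ P_d(a, v)`. A sequence with `d + 1`
degrees of freedom is never such a point: some nonzero combination `w` of the `d + 1`
independent perturbation directions satisfies the `d` linear constraints, and then both
`p + w` and `p - w` lie in `L_I ∩ P_d(a, v)`.
-/

theorem min_le_of_logConcave {f : ℕ → ℝ} {i j k : ℕ} (hij : i ≤ j) (hjk : j ≤ k)
    (hpos : ∀ n, i ≤ n → n ≤ k → 0 < f n)
    (hlc : ∀ n, i < n → n < k → f (n + 1) * f (n - 1) ≤ f n ^ 2) :
    min (f i) (f k) ≤ f j := by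
  by_contra! hj
  have hex : ∃ l, i ≤ l ∧ l ≤ k ∧ ∀ l', i ≤ l' → l' ≤ k → f l ≤ f l' := by
    obtain ⟨l, hl, hmin⟩ := (Finset.Icc i k).exists_min_image f
      ⟨i, Finset.mem_Icc.mpr ⟨le_rfl, hij.trans hjk⟩⟩
    simp only [Finset.mem_Icc] at hl hmin
    exact ⟨l, hl.1, hl.2, fun l' h1 h2 => hmin l' ⟨h1, h2⟩⟩
  -- the leftmost minimiser `l` of `f` on `[i, k]` is interior, and there log-concavity fails
  set l := Nat.find hex
  obtain ⟨hil, hlk, hmin⟩ : i ≤ l ∧ l ≤ k ∧ ∀ l', i ≤ l' → l' ≤ k → f l ≤ f l' :=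
    Nat.find_spec hex
  have hil_lt : i < l := hil.lt_of_ne fun h =>
    hj.not_ge ((min_le_left _ _).trans (h ▸ hmin j hij hjk))
  have hlk_lt : l < k := hlk.lt_of_ne fun h =>
    hj.not_ge ((min_le_right _ _).trans (h ▸ hmin j hij hjk))
  have hprev : f l < f (l - 1) := by
    obtain ⟨l', h1, h2, hl'⟩ : ∃ l', i ≤ l' ∧ l' ≤ k ∧ f l' < f (l - 1) := by
      by_contra! h
      exact Nat.find_min hex (show l - 1 < l by omega) ⟨by omega, by omega, h⟩
    exact (hmin l' h1 h2).trans_lt hl'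
  have hnext : f l ≤ f (l + 1) := hmin (l + 1) (by omega) (by omega)
  have hfl : 0 < f l := hpos l hil hlk
  nlinarith [hlc l hil_lt hlk_lt]

theorem IsLogConcaveSeq.min_le {m : ℕ} {p : Fin (m + 1) → ℝ} (hp : IsLogConcaveSeq p)
    {i j k : Fin (m + 1)} (hij : i ≤ j) (hjk : j ≤ k) : min (p i) (p k) ≤ p j := by
  obtain ⟨hnn, hint, hlc⟩ := hp
  rcases (hnn i).eq_or_lt with hi | hi
  · exact (min_le_left _ _).trans (hi ▸ hnn j)
  rcases (hnn k).eq_or_lt with hk | hk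
  · exact (min_le_right _ _).trans (hk ▸ hnn j)
  set f : ℕ → ℝ := fun n => if h : n < m + 1 then p ⟨n, h⟩ else 0
  have hf : ∀ n (h : n < m + 1), f n = p ⟨n, h⟩ := fun n h => dif_pos h
  have := min_le_of_logConcave (f := f) (i := i) (j := j) (k := k) hij hjk
    (fun n h1 h2 => by rw [hf n (by omega)]; exact hint i _ k h1 h2 hi hk)
    (fun n h1 h2 => by
      rw [hf _ (by omega), hf _ (by omega), hf _ (by omega)]; exact hlc n (by omega) (by omega))
  simpa only [hf _ i.isLt, hf _ j.isLt, hf _ k.isLt] using this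

theorem isLogConcaveSeq_iff_min_le {m : ℕ} {p : Fin (m + 1) → ℝ} :
    IsLogConcaveSeq p ↔ (∀ n, 0 ≤ p n) ∧
      (∀ i j k : Fin (m + 1), i ≤ j → j ≤ k → min (p i) (p k) ≤ p j) ∧
      ∀ n : ℕ, ∀ _h1 : 1 ≤ n, ∀ _h2 : n + 1 ≤ m,
        p ⟨n + 1, by omega⟩ * p ⟨n - 1, by omega⟩ ≤ p ⟨n, by omega⟩ ^ 2 :=
  ⟨fun hp => ⟨hp.1, fun _ _ _ => hp.min_le, hp.2.2⟩, fun ⟨hnn, hmin, hlc⟩ =>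
    ⟨hnn, fun i j k hij hjk hi hk => (lt_min hi hk).trans_le (hmin i j k hij hjk), hlc⟩⟩

theorem isClosed_setOf_isLogConcaveSeq {m : ℕ} :
    IsClosed {p : Fin (m + 1) → ℝ | IsLogConcaveSeq p} := by
  simp only [isLogConcaveSeq_iff_min_le, Set.ofPred_and, Set.ofPred_forall]
  refine .inter ?_ (.inter ?_ ?_) <;>
  repeat first
    | exact isClosed_le (by fun_prop) (by fun_prop)
    | refine isClosed_iInter fun _ => ?_

theorem isClosed_polytopeP (m d : ℕ) (v : Fin d → Fin (m + 1) → ℝ) (a : Fin d → ℝ) :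
    IsClosed (polytopeP m d v a) := by
  simp only [polytopeP, Set.ofPred_and, Set.ofPred_forall]
  exact .inter (isClosed_iInter fun n => isClosed_le (by fun_prop) (by fun_prop))
    (isClosed_iInter fun i => isClosed_eq (by fun_prop) (by fun_prop))

open Set

theorem IsMaxOn.isExtreme_inter_preimage_Ici {E : Type*} [AddCommGroup E] [Module ℝ E]
    {s K : Set E} {Φ : E → ℝ} {p₀ : E} (hmax : IsMaxOn Φ K p₀) (hΦ : ConvexOn ℝ s Φ)
    (hKs : K ⊆ s) : IsExtreme ℝ K (K ∩ Φ ⁻¹' Ici (Φ p₀)) where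
  subset := inter_subset_left
  left_mem_of_mem_openSegment _x hx _y hy _z hz hzxy :=
    ⟨hx, hz.2.trans (hΦ.le_left_of_right_le (hKs hx) (hKs hy) hzxy ((hmax hy).trans hz.2))⟩

theorem IsCompact.exists_mem_extremePoints_isMaxOn {E : Type*} [AddCommGroup E] [Module ℝ E]
    [TopologicalSpace E] [T2Space E] [IsTopologicalAddGroup E] [ContinuousSMul ℝ E]
    [LocallyConvexSpace ℝ E] {s K : Set E} {Φ : E → ℝ} (hK : IsCompact K) (hne : K.Nonempty)
    (hΦc : ContinuousOn Φ K) (hΦ : ConvexOn ℝ s Φ) (hKs : K ⊆ s) :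
    ∃ p ∈ K.extremePoints ℝ, IsMaxOn Φ K p := by
  obtain ⟨p₀, hp₀, hmax⟩ := hK.exists_isMaxOn hne hΦc
  have hS : IsCompact (K ∩ Φ ⁻¹' Ici (Φ p₀)) :=
    hK.of_isClosed_subset (hΦc.preimage_isClosed_of_isClosed hK.isClosed isClosed_Ici)
      inter_subset_left
  obtain ⟨p, hp⟩ := hS.extremePoints_nonempty ⟨p₀, hp₀, le_refl (Φ p₀)⟩
  exact ⟨p, (hmax.isExtreme_inter_preimage_Ici hΦ hKs).extremePoints_subset_extremePoints hp,
    isMaxOn_iff.mpr fun x hx => (hmax hx).trans hp.1.2⟩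

theorem notMem_extremePoints_of_add_mem_of_sub_mem {𝕜 E : Type*} [Field 𝕜] [LinearOrder 𝕜]
    [IsStrictOrderedRing 𝕜] [AddCommGroup E] [Module 𝕜 E] {A : Set E} {x w : E} (hw : w ≠ 0)
    (hadd : x + w ∈ A) (hsub : x - w ∈ A) : x ∉ A.extremePoints 𝕜 := fun hx =>
  hw (by simpa using hx.2 hadd hsub (mem_openSegment_add_sub x w))

theorem Submodule.exists_mem_ne_zero_norm_lt {E : Type*} [NormedAddCommGroup E]
    [NormedSpace ℝ E] {W : Submodule ℝ E} (hW : W ≠ ⊥) {ε : ℝ} (hε : 0 < ε) :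
    ∃ x ∈ W, x ≠ 0 ∧ ‖x‖ < ε := by
  obtain ⟨x, hxW, hx⟩ := W.ne_bot_iff.mp hW
  have hx' : 0 < ‖x‖ := norm_pos_iff.mpr hx
  refine ⟨(ε / 2 / ‖x‖) • x, W.smul_mem _ hxW, smul_ne_zero (by positivity) hx, ?_⟩
  rw [norm_smul, Real.norm_of_nonneg (by positivity), div_mul_cancel₀ _ hx'.ne']
  linarith

theorem add_mem_polytopeP {m d : ℕ} {v : Fin d → Fin (m + 1) → ℝ} {a : Fin d → ℝ}
    {p w : Fin (m + 1) → ℝ} (hp : p ∈ polytopeP m d v a) (hnn : ∀ n, 0 ≤ p n + w n)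
    (hw : ∀ i, ∑ n, w n * v i n = 0) : p + w ∈ polytopeP m d v a :=
  ⟨hnn, fun i => by simp only [Pi.add_apply, add_mul, Finset.sum_add_distrib, hp.2 i, hw i,
    add_zero]⟩

theorem HasDegreesOfFreedom.exists_add_mem_sub_mem {m d : ℕ} {v : Fin d → Fin (m + 1) → ℝ}
    {a : Fin d → ℝ} {p : Fin (m + 1) → ℝ} (hdof : HasDegreesOfFreedom p (d + 1))
    (hp : p ∈ polytopeP m d v a) :
    ∃ w ≠ 0, p + w ∈ {p | IsLogConcaveSeq p} ∩ polytopeP m d v a ∧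
      p - w ∈ {p | IsLogConcaveSeq p} ∩ polytopeP m d v a := by
  obtain ⟨q, ε, hε, hli, -, hpert⟩ := hdof
  -- `d` linear constraints on `d + 1` coefficients have a nonzero, arbitrarily small solution
  set g := (Matrix.of v).mulVecLin ∘ₗ Fintype.linearCombination ℝ q
  obtain ⟨c, hcg, hc0, hcε⟩ := Submodule.exists_mem_ne_zero_norm_lt
    (LinearMap.ker_ne_bot_of_finrank_lt (f := g) (by simp)) hε
  set w := ∑ j, c j • q j
  have hperturb : ∀ δ : Fin (d + 1) → ℝ,
      (fun n => p n + ∑ j, δ j * q j n) = p + ∑ j, δ j • q j := fun δ => by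
    ext n; simp [Finset.sum_apply]
  have hc : ∀ j, |c j| < ε := fun j => (norm_le_pi_norm c j).trans_lt hcε
  have hadd : IsLogConcaveSeq (p + w) := hperturb c ▸ hpert c hc
  have hsub : IsLogConcaveSeq (p - w) := by
    have h := hperturb (-c) ▸ hpert (-c) (by simpa using hc)
    simpa [neg_smul, Finset.sum_neg_distrib, ← sub_eq_add_neg] using h
  have hwv : ∀ i, ∑ n, w n * v i n = 0 := fun i => by
    have h : Matrix.mulVec (Matrix.of v) w i = 0 := congrFun (LinearMap.mem_ker.mp hcg) i
    rwa [Matrix.mulVec, dotProduct_comm] at h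
  refine ⟨w, fun h => hc0 (funext (Fintype.linearIndependent_iff.mp hli c h)), ⟨hadd,
    add_mem_polytopeP hp hadd.1 hwv⟩, ⟨hsub, ?_⟩⟩
  rw [sub_eq_add_neg]
  exact add_mem_polytopeP hp (by simpa [sub_eq_add_neg] using hsub.1) (by simpa using hwv)

/-- The supremum of a convex continuous functional `Φ` over
`L_I ∩ P_d(a, v)` (assumed nonempty, with `P_d(a, v)` bounded) is attained at some sequence
having at most `d` degrees of freedom, i.e. not having `d + 1` degrees of freedom. -/
theorem convex_max_attained_at_low_dof
    {m d : ℕ} (v : Fin d → Fin (m + 1) → ℝ) (a : Fin d → ℝ)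
    (hbdd : Bornology.IsBounded (polytopeP m d v a))
    (hne : ({p | IsLogConcaveSeq p} ∩ polytopeP m d v a).Nonempty)
    (Φ : (Fin (m + 1) → ℝ) → ℝ)
    (hΦcont : Continuous Φ) (hΦconv : ConvexOn ℝ Set.univ Φ) :
    ∃ p ∈ {p | IsLogConcaveSeq p} ∩ polytopeP m d v a,
      ¬ HasDegreesOfFreedom p (d + 1) ∧
      ∀ q ∈ {p | IsLogConcaveSeq p} ∩ polytopeP m d v a, Φ q ≤ Φ p := by
  have hK : IsCompact ({p | IsLogConcaveSeq p} ∩ polytopeP m d v a) :=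
    Metric.isCompact_of_isClosed_isBounded
      (isClosed_setOf_isLogConcaveSeq.inter (isClosed_polytopeP m d v a))
      (hbdd.subset Set.inter_subset_right)
  obtain ⟨p, hpext, hpmax⟩ := hK.exists_mem_extremePoints_isMaxOn hne hΦcont.continuousOn
    hΦconv (Set.subset_univ _)
  refine ⟨p, hpext.1, fun hdof => ?_, fun q hq => hpmax hq⟩
  obtain ⟨w, hw, hadd, hsub⟩ := hdof.exists_add_mem_sub_mem hpext.1.2
  exact notMem_extremePoints_of_add_mem_of_sub_mem hw hadd hsub hpext
end

section
/- Let I = {0,1,…,m} be a finite discrete interval, let L_I ⊆ ℝ^{|I|} denote the set of all log-concave sequences indexed by I, let v_1,…,v_d ∈ ℝ^{|I|} and a_1,…,a_d ∈ ℝ, and let A = L_I ∩ P_d(a,v) where P_d(a,v) = {p ∈ [0,∞)^{|I|} : ⟨p, v_i⟩ = a_i for i = 1,…,d}. If p ∈ A has d+1 degrees of freedom, then p is not an extreme point of the convex hull of A. -/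
/-! The `d + 1` directions of freedom of `p` span a `(d + 1)`-dimensional space, which the `d`
linear constraints `⟨·, v i⟩` cannot map injectively to `ℝ^d`. A nonzero direction `r` in their
kernel, scaled small enough, keeps `p ± r` log-concave, and `p ± r` then still satisfies the
constraints, so `p ± r ∈ A` and `p` is the midpoint of two distinct points of `A`. -/

open Filter Matrix Topology

theorem notMem_extremePoints_of_add_mem_of_sub_mem_s3 {E : Type*} [AddCommGroup E] [Module ℝ E]
    {B : Set E} {x r : E} (hr : r ≠ 0) (hadd : x + r ∈ B) (hsub : x - r ∈ B) :
    x ∉ B.extremePoints ℝ := fun hx ↦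
  hr <| by simpa using hx.2 hadd hsub (mem_openSegment_add_sub x r)

theorem exists_pos_forall_abs_mul_lt {ι : Type*} [Finite ι] (c : ι → ℝ) {ε : ℝ} (hε : 0 < ε) :
    ∃ t > 0, ∀ i, |t * c i| < ε := by
  have h : ∀ᶠ t in 𝓝 (0 : ℝ), ∀ i, |t * c i| < ε := eventually_all.2 fun i ↦
    (continuous_id.mul continuous_const).abs.continuousAt.eventually_lt continuousAt_const
      (by simpa using hε)
  obtain ⟨t, ht, ht0⟩ := ((h.filter_mono nhdsWithin_le_nhds).and (self_mem_nhdsWithin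
    (s := Set.Ioi 0))).exists
  exact ⟨t, ht0, ht⟩

theorem mem_polytopeP_iff {m d : ℕ} {v : Fin d → Fin (m + 1) → ℝ} {a : Fin d → ℝ}
    {p : Fin (m + 1) → ℝ} : p ∈ polytopeP m d v a ↔ 0 ≤ p ∧ of v *ᵥ p = a := by
  simp [polytopeP, Pi.le_def, funext_iff, mulVec, dotProduct, mul_comm]

theorem HasDegreesOfFreedom.exists_ne_zero_perturbation_of_finrank_lt {m k : ℕ}
    {p : Fin (m + 1) → ℝ} (h : HasDegreesOfFreedom p k) {W : Type*} [AddCommGroup W]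
    [Module ℝ W] [FiniteDimensional ℝ W] (f : (Fin (m + 1) → ℝ) →ₗ[ℝ] W)
    (hk : Module.finrank ℝ W < k) :
    ∃ r ≠ 0, f r = 0 ∧ IsLogConcaveSeq (p + r) ∧ IsLogConcaveSeq (p - r) := by
  obtain ⟨q, ε, hε, hq, -, hlc⟩ := h
  obtain ⟨c, hc, i, hci⟩ : ∃ c : Fin k → ℝ, ∑ i, c i • f (q i) = 0 ∧ ∃ i, c i ≠ 0 :=
    Fintype.not_linearIndependent_iff.1 fun hfq ↦
      hk.not_ge (by simpa using hfq.fintype_card_le_finrank)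
  obtain ⟨t, ht, htc⟩ := exists_pos_forall_abs_mul_lt c hε
  have hperturb (δ : Fin k → ℝ) : (fun n ↦ p n + ∑ i, δ i * q i n) = p + ∑ i, δ i • q i := by
    ext n; simp [Finset.sum_apply]
  refine ⟨∑ i, (t * c i) • q i, fun h0 ↦ ?_, ?_, ?_, ?_⟩
  · exact mul_ne_zero ht.ne' hci (Fintype.linearIndependent_iff.1 hq _ h0 i)
  · simp [map_sum, map_smul, mul_smul, ← Finset.smul_sum, hc]
  · simpa [hperturb] using hlc _ htc
  · have := hlc (fun i ↦ -(t * c i)) (by simpa using htc)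
    rwa [hperturb, Finset.sum_congr rfl fun i _ ↦ neg_smul _ _, Finset.sum_neg_distrib,
      ← sub_eq_add_neg] at this

/-- If `p ∈ A = L_I ∩ P_d(a, v)` has `d + 1` degrees of freedom, then `p` is
not an extreme point of the convex hull of `A`. -/
theorem dof_not_extreme_point
    {m d : ℕ} (v : Fin d → Fin (m + 1) → ℝ) (a : Fin d → ℝ)
    (p : Fin (m + 1) → ℝ)
    (hp : p ∈ {p | IsLogConcaveSeq p} ∩ polytopeP m d v a)
    (hdof : HasDegreesOfFreedom p (d + 1)) :
    p ∉ Set.extremePoints ℝ (convexHull ℝ ({p | IsLogConcaveSeq p} ∩ polytopeP m d v a)) := by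
  obtain ⟨r, hr, hvr, hadd, hsub⟩ :=
    hdof.exists_ne_zero_perturbation_of_finrank_lt (mulVecLin (of v)) (by simp)
  rw [mulVecLin_apply] at hvr
  obtain ⟨-, hvp⟩ := mem_polytopeP_iff.1 hp.2
  refine notMem_extremePoints_of_add_mem_of_sub_mem_s3 hr (subset_convexHull ℝ _ ⟨hadd, ?_⟩)
    (subset_convexHull ℝ _ ⟨hsub, ?_⟩)
  · exact mem_polytopeP_iff.2 ⟨hadd.1, by rw [mulVec_add, hvr, hvp, add_zero]⟩
  · exact mem_polytopeP_iff.2 ⟨hsub.1, by rw [mulVec_sub, hvr, hvp, sub_zero]⟩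
end

section
/- Let V : {0,1,…,L} → ℝ be a convex sequence (V(n+1) + V(n−1) ≥ 2V(n) for 1 ≤ n ≤ L−1) and let V'(n) = V(n+1) − V(n) be its slope sequence. Define n_0 = 0 and inductively n_{i+1} = min{n > n_i : V'(n) > V'(n_i)} for as long as this set is nonempty, obtaining n_0 < n_1 < … < n_k. For i = 0,1,…,k define the sequence V_i on {0,…,L} by V_i(n) = V(n) for n ∈ [0, n_i] and V_i(n) = V(n_i) + V'(n_i)·(n − n_i) for n ∈ [n_i, L]. Then there exists ε > 0 such that for all δ, δ_0, δ_1, …, δ_k ∈ (−ε, ε), the sequence n ↦ e^{−V(n)} · (1 + δ + δ_0 V_0(n) + δ_1 V_1(n) + … + δ_k V_k(n)) is log-concave on {0,1,…,L}. -/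
def LogConcaveOn (L : ℕ) (p : ℕ → ℝ) : Prop :=
  (∀ n ≤ L, 0 ≤ p n) ∧
  (∀ i j k : ℕ, i ≤ j → j ≤ k → k ≤ L → 0 < p i → 0 < p k → 0 < p j) ∧
  ∀ n : ℕ, 1 ≤ n → n + 1 ≤ L → p (n + 1) * p (n - 1) ≤ p n ^ 2

/-! Each `Vᵢ` follows `V` up to `nᵢ` and is affine afterwards, so its second difference is
either that of `V` or zero; in particular it is dominated by the (nonnegative) second
difference of `V`. Hence the perturbation factor `f = 1 + δ + ∑ δᵢ Vᵢ` stays close to `1` and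
`|Δ²f| ≤ ε' Δ²V` with `ε'` small. Log-concavity of `e^{-V} f` amounts to
`f(n+1) f(n-1) ≤ e^{Δ²V(n)} f(n)²`, which follows from `f(n+1) f(n-1) ≤ ((f(n+1) + f(n-1))/2)²`
and `1 + x ≤ eˣ`. -/

open Finset

def secondDiff (f : ℕ → ℝ) (n : ℕ) : ℝ := f (n + 1) + f (n - 1) - 2 * f n

def affineContinuation (V : ℕ → ℝ) (a m : ℕ) : ℝ :=
  if m ≤ a then V m else V a + (V (a + 1) - V a) * ((m : ℝ) - (a : ℝ))

theorem secondDiff_affineContinuation (V : ℕ → ℝ) (a : ℕ) {n : ℕ} (hn : 1 ≤ n) :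
    secondDiff (affineContinuation V a) n = if n ≤ a then secondDiff V n else 0 := by
  obtain ⟨m, rfl⟩ : ∃ m, n = m + 1 := ⟨n - 1, by omega⟩
  rcases lt_trichotomy (m + 1) a with h | rfl | h
  · simp [secondDiff, affineContinuation, show m + 1 + 1 ≤ a by omega, show m ≤ a by omega,
      h.le]
  · simp [secondDiff, affineContinuation]
  · simp only [secondDiff, affineContinuation, Nat.add_sub_cancel,
      if_neg (show ¬ m + 1 + 1 ≤ a by omega), if_neg (show ¬ m + 1 ≤ a by omega)]
    rcases (show m = a ∨ a < m by omega) with rfl | hm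
    · simp
      ring
    · simp [if_neg (show ¬ m ≤ a by omega)]
      ring

theorem abs_secondDiff_affineContinuation_le (V : ℕ → ℝ) (a : ℕ) {n : ℕ} (hn : 1 ≤ n)
    (hV : 0 ≤ secondDiff V n) : |secondDiff (affineContinuation V a) n| ≤ secondDiff V n := by
  rw [secondDiff_affineContinuation V a hn]
  split_ifs
  · exact (abs_of_nonneg hV).le
  · simpa using hV

theorem secondDiff_const_add_sum_mul {ι : Type*} (a : ℝ) (s : Finset ι) (c : ι → ℝ)
    (W : ι → ℕ → ℝ) (n : ℕ) :
    secondDiff (fun m => a + ∑ i ∈ s, c i * W i m) n = ∑ i ∈ s, c i * secondDiff (W i) n := by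
  simp only [secondDiff, mul_sub, mul_add, sum_sub_distrib, sum_add_distrib,
    mul_left_comm _ (2 : ℝ), ← mul_sum]
  ring

theorem abs_sum_mul_le {ι : Type*} (s : Finset ι) (c a : ι → ℝ) {ε : ℝ}
    (hc : ∀ i ∈ s, |c i| ≤ ε) : |∑ i ∈ s, c i * a i| ≤ ε * ∑ i ∈ s, |a i| := by
  rw [mul_sum]
  refine (abs_sum_le_sum_abs _ _).trans (sum_le_sum fun i hi => ?_)
  rw [abs_mul]
  exact mul_le_mul_of_nonneg_right (hc i hi) (abs_nonneg _)

theorem mul_le_exp_mul_sq {c x y z : ℝ} (hc : 0 ≤ c) (hz : 0 ≤ z)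
    (hd : |x + y - 2 * z| ≤ c * z) : x * y ≤ Real.exp c * z ^ 2 := by
  have hmean : |(x + y) / 2| ≤ (1 + c / 2) * z := by
    rw [abs_le] at hd ⊢
    constructor <;> nlinarith
  have hexp : (1 + c / 2) ^ 2 ≤ Real.exp c := by
    rw [show c = c / 2 + c / 2 by ring, Real.exp_add, ← sq]
    exact pow_le_pow_left₀ (by positivity) (by linarith [Real.add_one_le_exp (c / 2)]) 2
  calc x * y ≤ ((x + y) / 2) ^ 2 := by nlinarith [sq_nonneg (x - y)]
    _ ≤ ((1 + c / 2) * z) ^ 2 := sq_le_sq' (abs_le.mp hmean).1 (abs_le.mp hmean).2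
    _ = (1 + c / 2) ^ 2 * z ^ 2 := by ring
    _ ≤ Real.exp c * z ^ 2 := mul_le_mul_of_nonneg_right hexp (sq_nonneg z)

theorem logConcaveOn_exp_neg_mul (L : ℕ) (V f : ℕ → ℝ) (hf : ∀ m ≤ L, 0 < f m)
    (h : ∀ n, 1 ≤ n → n + 1 ≤ L → f (n + 1) * f (n - 1) ≤ Real.exp (secondDiff V n) * f n ^ 2) :
    LogConcaveOn L (fun m => Real.exp (-V m) * f m) := by
  refine ⟨fun m hm => (mul_pos (Real.exp_pos _) (hf m hm)).le,
    fun _ j _ _ hjk hkL _ _ => mul_pos (Real.exp_pos _) (hf j (hjk.trans hkL)),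
    fun n hn hnL => ?_⟩
  have hweight : Real.exp (-V (n + 1)) * Real.exp (-V (n - 1)) * Real.exp (secondDiff V n) =
      Real.exp (-V n) ^ 2 := by
    rw [← Real.exp_add, ← Real.exp_add, ← Real.exp_nat_mul, secondDiff]
    congr 1
    push_cast
    ring
  calc Real.exp (-V (n + 1)) * f (n + 1) * (Real.exp (-V (n - 1)) * f (n - 1))
      = Real.exp (-V (n + 1)) * Real.exp (-V (n - 1)) * (f (n + 1) * f (n - 1)) := by ring
    _ ≤ Real.exp (-V (n + 1)) * Real.exp (-V (n - 1)) * (Real.exp (secondDiff V n) * f n ^ 2) :=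
        mul_le_mul_of_nonneg_left (h n hn hnL) (by positivity)
    _ = (Real.exp (-V n) * f n) ^ 2 := by rw [← mul_assoc, hweight]; ring

theorem exists_logConcaveOn_exp_neg_mul_perturbation {ι : Type*} (L : ℕ) (V : ℕ → ℝ)
    (hV : ∀ n, 1 ≤ n → n + 1 ≤ L → 0 ≤ secondDiff V n) (s : Finset ι) (W : ι → ℕ → ℝ)
    (hW : ∀ i ∈ s, ∀ n, 1 ≤ n → n + 1 ≤ L → |secondDiff (W i) n| ≤ secondDiff V n) :
    ∃ ε > 0, ∀ (δ : ℝ) (δ' : ι → ℝ), |δ| < ε → (∀ i ∈ s, |δ' i| < ε) →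
      LogConcaveOn L (fun m => Real.exp (-V m) * (1 + δ + ∑ i ∈ s, δ' i * W i m)) := by
  set S := ∑ i ∈ s, ∑ m ∈ range (L + 1), |W i m|
  have hS : 0 ≤ S := sum_nonneg fun i _ => sum_nonneg fun m _ => abs_nonneg _
  set M : ℝ := 1 + #s + S
  have hM : 0 < M := by positivity
  refine ⟨1 / (4 * M), by positivity, fun δ δ' hδ hδ' => ?_⟩
  set ε := 1 / (4 * M)
  have hεM : ε * M = 1 / 4 := by simp only [ε]; field_simp
  have hδ'le : ∀ i ∈ s, |δ' i| ≤ ε := fun i hi => (hδ' i hi).le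
  have hf : ∀ m ≤ L, 3 / 4 ≤ 1 + δ + ∑ i ∈ s, δ' i * W i m := by
    intro m hm
    have hWm : ∑ i ∈ s, |W i m| ≤ S :=
      sum_le_sum fun i _ => single_le_sum (f := fun m => |W i m|) (fun _ _ => abs_nonneg _)
        (mem_range.mpr (Nat.lt_succ_of_le hm))
    have hsmall : |δ + ∑ i ∈ s, δ' i * W i m| ≤ 1 / 4 :=
      calc |δ + ∑ i ∈ s, δ' i * W i m|
          ≤ |δ| + |∑ i ∈ s, δ' i * W i m| := abs_add_le _ _
        _ ≤ ε + ε * S := add_le_add hδ.le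
            ((abs_sum_mul_le s δ' _ hδ'le).trans (by gcongr))
        _ ≤ ε * M := by simp only [M]; nlinarith [(#s).cast_nonneg (α := ℝ)]
        _ = 1 / 4 := hεM
    linarith [(abs_le.mp hsmall).1]
  refine logConcaveOn_exp_neg_mul L V _ (fun m hm => by linarith [hf m hm]) fun n hn hnL => ?_
  have hc := hV n hn hnL
  have hΔ : |secondDiff (fun m => 1 + δ + ∑ i ∈ s, δ' i * W i m) n| ≤ secondDiff V n / 4 := by
    rw [secondDiff_const_add_sum_mul]
    calc |∑ i ∈ s, δ' i * secondDiff (W i) n|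
        ≤ ε * ∑ i ∈ s, |secondDiff (W i) n| := abs_sum_mul_le s δ' _ hδ'le
      _ ≤ ε * (#s * secondDiff V n) := by
          gcongr
          simpa using sum_le_sum fun i hi => hW i hi n hn hnL
      _ ≤ ε * (M * secondDiff V n) := by gcongr; simp only [M]; linarith
      _ = secondDiff V n / 4 := by rw [← mul_assoc, hεM]; ring
  have hfn := hf n (by omega)
  have hΔf : |secondDiff (fun m => 1 + δ + ∑ i ∈ s, δ' i * W i m) n| ≤
      secondDiff V n * (1 + δ + ∑ i ∈ s, δ' i * W i n) :=
    hΔ.trans (by nlinarith)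
  exact mul_le_exp_mul_sq hc (by linarith) hΔf

theorem perturbed_sequence_log_concave_general
    (L : ℕ) (V : ℕ → ℝ)
    (hconv : ∀ n : ℕ, 1 ≤ n → n + 1 ≤ L → 2 * V n ≤ V (n + 1) + V (n - 1))
    (k : ℕ) (nn : ℕ → ℕ) :
    ∃ ε > 0, ∀ (δ : ℝ) (δ' : ℕ → ℝ), |δ| < ε → (∀ i ≤ k, |δ' i| < ε) →
      LogConcaveOn L (fun m => Real.exp (-(V m)) *
        (1 + δ + ∑ i ∈ Finset.range (k + 1), δ' i *
          (if m ≤ nn i then V m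
           else V (nn i) + (V (nn i + 1) - V (nn i)) * ((m : ℝ) - (nn i : ℝ))))) := by
  have hV : ∀ n, 1 ≤ n → n + 1 ≤ L → 0 ≤ secondDiff V n := fun n hn hnL =>
    sub_nonneg.mpr (hconv n hn hnL)
  obtain ⟨ε, hε, hlc⟩ := exists_logConcaveOn_exp_neg_mul_perturbation L V hV (range (k + 1))
    (fun i => affineContinuation V (nn i))
    fun i _ n hn hnL => abs_secondDiff_affineContinuation_le V (nn i) hn (hV n hn hnL)
  exact ⟨ε, hε, fun δ δ' hδ hδ' =>
    hlc δ δ' hδ fun i hi => hδ' i (Nat.lt_succ_iff.mp (mem_range.mp hi))⟩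

/-- Let `V` be a convex sequence on `{0,…,L}` with slope sequence
`V' n = V (n+1) - V n`. Let `n 0 = 0 < n 1 < … < n k` be the points where the slope
successively strictly increases (each `n (i+1)` minimal with `V' (n (i+1)) > V' (n i)`, and no
further slope increase after `n k`). Define `Vᵢ` to agree with `V` on `[0, n i]` and continue
affinely with slope `V' (n i)` on `[n i, L]`. Then there exists `ε > 0` such that for all
`δ, δ' 0, …, δ' k ∈ (-ε, ε)` the sequence
`m ↦ e^{-V m} (1 + δ + ∑ i, δ' i * Vᵢ m)` is log-concave on `{0,…,L}`. -/
theorem perturbed_sequence_log_concave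
    (L : ℕ) (hL : 1 ≤ L) (V : ℕ → ℝ)
    (hconv : ∀ n : ℕ, 1 ≤ n → n + 1 ≤ L → 2 * V n ≤ V (n + 1) + V (n - 1))
    (k : ℕ) (nn : ℕ → ℕ) (hn0 : nn 0 = 0)
    (hdom : ∀ i ≤ k, nn i + 1 ≤ L)
    (hstep : ∀ i < k,
      nn i < nn (i + 1) ∧
      V (nn i + 1) - V (nn i) < V (nn (i + 1) + 1) - V (nn (i + 1)) ∧
      ∀ m, nn i < m → m < nn (i + 1) →
        ¬ (V (nn i + 1) - V (nn i) < V (m + 1) - V m))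
    (hlast : ∀ m, nn k < m → m + 1 ≤ L →
      ¬ (V (nn k + 1) - V (nn k) < V (m + 1) - V m)) :
    ∃ ε > 0, ∀ (δ : ℝ) (δ' : ℕ → ℝ), |δ| < ε → (∀ i ≤ k, |δ' i| < ε) →
      LogConcaveOn L (fun m => Real.exp (-(V m)) *
        (1 + δ + ∑ i ∈ Finset.range (k + 1), δ' i *
          (if m ≤ nn i then V m
           else V (nn i) + (V (nn i + 1) - V (nn i)) * ((m : ℝ) - (nn i : ℝ))))) :=
  perturbed_sequence_log_concave_general L V hconv k nn
end

section
/- Let V : {0,1,…,L} → ℝ be a convex sequence with slope sequence V'(n) = V(n+1) − V(n), and assume V'(0) ≠ 0. Define n_0 = 0 and inductively n_{i+1} = min{n > n_i : V'(n) > V'(n_i)} for as long as this set is nonempty, obtaining n_0 < n_1 < … < n_k. For i = 0,1,…,k define the sequence V_i on {0,…,L} by V_i(n) = V(n) for n ∈ [0, n_i] and V_i(n) = V(n_i) + V'(n_i)·(n − n_i) for n ∈ [n_i, L]. Then the k+2 sequences 1, V_0, V_1, …, V_k are linearly independent as vectors in ℝ^{L+1}. -/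
/-- Let `V` be a convex sequence on `{0,…,L}` with slope sequence
`V' n = V (n+1) - V n` and `V' 0 ≠ 0`. Let `n 0 = 0 < n 1 < … < n k` be the points where the
slope successively strictly increases (each `n (i+1)` minimal with `V' (n (i+1)) > V' (n i)`,
and no further slope increase after `n k`). Define `Vᵢ` to agree with `V` on `[0, n i]` and
continue affinely with slope `V' (n i)` on `[n i, L]`. Then the `k + 2` sequences
`1, V₀, V₁, …, V_k` are linearly independent as vectors in `ℝ^{L+1}`. -/
theorem tangent_sequences_linear_independent
    (L : ℕ) (hL : 1 ≤ L) (V : ℕ → ℝ)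
    (hconv : ∀ n : ℕ, 1 ≤ n → n + 1 ≤ L → 2 * V n ≤ V (n + 1) + V (n - 1))
    (hslope0 : V 1 - V 0 ≠ 0)
    (k : ℕ) (nn : ℕ → ℕ) (hn0 : nn 0 = 0)
    (hdom : ∀ i ≤ k, nn i + 1 ≤ L)
    (hstep : ∀ i < k,
      nn i < nn (i + 1) ∧
      V (nn i + 1) - V (nn i) < V (nn (i + 1) + 1) - V (nn (i + 1)) ∧
      ∀ m, nn i < m → m < nn (i + 1) →
        ¬ (V (nn i + 1) - V (nn i) < V (m + 1) - V m))
    (hlast : ∀ m, nn k < m → m + 1 ≤ L →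
      ¬ (V (nn k + 1) - V (nn k) < V (m + 1) - V m)) :
    LinearIndependent ℝ (fun i : Fin (k + 2) => fun m : Fin (L + 1) =>
      if (i : ℕ) = 0 then (1 : ℝ)
      else
        (if (m : ℕ) ≤ nn ((i : ℕ) - 1) then V (m : ℕ)
         else V (nn ((i : ℕ) - 1)) +
           (V (nn ((i : ℕ) - 1) + 1) - V (nn ((i : ℕ) - 1))) *
             ((m : ℕ) - (nn ((i : ℕ) - 1) : ℝ)))) := by
  rw [Fintype.linearIndependent_iff]
  intro g hg
  set a : ℕ → ℝ := fun i => V (nn i + 1) - V (nn i) with ha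
  -- strict monotonicity of nn on [0,k]
  have hlt : ∀ j, j ≤ k → ∀ i, i < j → nn i < nn j := by
    intro j
    induction j with
    | zero => intro _ i h; omega
    | succ j ih =>
      intro hjk i hij
      have h1 := (hstep j (by omega)).1
      rcases Nat.lt_or_ge i j with h | h
      · exact (ih (by omega) i h).trans h1
      · have hij' : i = j := by omega
        subst hij'; exact h1
  have hle : ∀ i j : ℕ, i ≤ j → j ≤ k → nn i ≤ nn j := by
    intro i j hij hjk
    rcases eq_or_lt_of_le hij with h | h
    · subst h; exact le_rfl
    · exact (hlt j hjk i h).le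
  -- evaluation of the relation at each point m ≤ L
  have hE : ∀ m : ℕ, m ≤ L →
      ∑ j : Fin (k+2), g j * (if (j : ℕ) = 0 then (1:ℝ) else
        (if m ≤ nn ((j : ℕ) - 1) then V m
         else V (nn ((j : ℕ) - 1)) +
           (V (nn ((j : ℕ) - 1) + 1) - V (nn ((j : ℕ) - 1))) *
             ((m : ℝ) - (nn ((j : ℕ) - 1) : ℝ)))) = 0 := by
    intro m hm
    have h := congrFun hg ⟨m, by omega⟩
    simpa [Finset.sum_apply, Pi.smul_apply, smul_eq_mul] using h
  -- slope equations at the points nn i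
  have hS : ∀ i : ℕ, i ≤ k →
      ∑ j : Fin (k+2), g j * (if (j : ℕ) = 0 then (0:ℝ) else a (min i ((j:ℕ)-1))) = 0 := by
    intro i hi
    have h1 := hE (nn i + 1) (hdom i hi)
    have h2 := hE (nn i) (by have := hdom i hi; omega)
    have key : ∑ j : Fin (k+2), g j * (if (j : ℕ) = 0 then (0:ℝ) else a (min i ((j:ℕ)-1)))
        = (∑ j : Fin (k+2), g j * (if (j : ℕ) = 0 then (1:ℝ) else
            (if nn i + 1 ≤ nn ((j : ℕ) - 1) then V (nn i + 1)
             else V (nn ((j : ℕ) - 1)) +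
               (V (nn ((j : ℕ) - 1) + 1) - V (nn ((j : ℕ) - 1))) *
                 (((nn i + 1 : ℕ) : ℝ) - (nn ((j : ℕ) - 1) : ℝ)))))
          - (∑ j : Fin (k+2), g j * (if (j : ℕ) = 0 then (1:ℝ) else
            (if nn i ≤ nn ((j : ℕ) - 1) then V (nn i)
             else V (nn ((j : ℕ) - 1)) +
               (V (nn ((j : ℕ) - 1) + 1) - V (nn ((j : ℕ) - 1))) *
                 (((nn i : ℕ) : ℝ) - (nn ((j : ℕ) - 1) : ℝ))))) := by
      rw [← Finset.sum_sub_distrib]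
      apply Finset.sum_congr rfl
      intro j _
      by_cases hj0 : (j : ℕ) = 0
      · simp [hj0]
      · have hpk : (j : ℕ) - 1 ≤ k := by have := j.isLt; omega
        rw [if_neg hj0, if_neg hj0, if_neg hj0]
        rcases Nat.lt_or_ge ((j:ℕ)-1) i with hpi | hip
        · have hnp : nn ((j:ℕ)-1) < nn i := hlt i hi _ hpi
          rw [if_neg (by omega), if_neg (by omega), min_eq_right hpi.le]
          simp only [ha]
          push_cast
          ring
        · rcases Nat.lt_or_ge (nn i) (nn ((j:ℕ)-1)) with hni | hni
          · rw [if_pos (by omega), if_pos (by omega), min_eq_left hip]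
            simp only [ha]
            ring
          · have heq : nn ((j:ℕ)-1) = nn i := le_antisymm hni (hle i _ hip hpk)
            rw [if_neg (by omega), if_pos (by omega), min_eq_left hip, heq]
            have haa : a i = a ((j:ℕ)-1) := by simp only [ha, heq]
            rw [haa]
            simp only [ha, heq]
            push_cast
            ring
    rw [key, h1, h2]
    ring
  -- tail sums vanish
  have hT : ∀ i : ℕ, 1 ≤ i → i ≤ k →
      ∑ j : Fin (k+2), (if i + 1 ≤ (j : ℕ) then g j else 0) = 0 := by
    intro i h1i hik
    have hSi := hS i hik
    have hSi' := hS (i-1) (by omega)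
    have hane : a (i-1) < a i := by
      have h := (hstep (i-1) (by omega)).2.1
      have hi1 : i - 1 + 1 = i := by omega
      rw [hi1] at h
      simpa only [ha] using h
    have key : ∑ j : Fin (k+2),
        (g j * (if (j : ℕ) = 0 then (0:ℝ) else a (min i ((j:ℕ)-1)))
          - g j * (if (j : ℕ) = 0 then (0:ℝ) else a (min (i-1) ((j:ℕ)-1))))
        = (a i - a (i-1)) * ∑ j : Fin (k+2), (if i + 1 ≤ (j : ℕ) then g j else 0) := by
      rw [Finset.mul_sum]
      apply Finset.sum_congr rfl
      intro j _
      by_cases hj0 : (j : ℕ) = 0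
      · rw [if_pos hj0, if_pos hj0, if_neg (by omega)]
        ring
      · rw [if_neg hj0, if_neg hj0]
        rcases Nat.lt_or_ge ((j:ℕ)-1) i with hpi | hip
        · rw [min_eq_right hpi.le, min_eq_right (by omega), if_neg (by omega)]
          ring
        · rw [min_eq_left hip, min_eq_left (by omega), if_pos (by omega)]
          ring
    have hsum : ∑ j : Fin (k+2),
        (g j * (if (j : ℕ) = 0 then (0:ℝ) else a (min i ((j:ℕ)-1)))
          - g j * (if (j : ℕ) = 0 then (0:ℝ) else a (min (i-1) ((j:ℕ)-1)))) = 0 := by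
      rw [Finset.sum_sub_distrib, hSi, hSi']; ring
    rw [key] at hsum
    rcases mul_eq_zero.mp hsum with h | h
    · exact absurd h (sub_ne_zero_of_ne hane.ne')
    · exact h
  have hTtop : ∑ j : Fin (k+2), (if k + 1 + 1 ≤ (j : ℕ) then g j else 0) = 0 := by
    apply Finset.sum_eq_zero
    intro j _
    have := j.isLt
    rw [if_neg (by omega)]
  have hdiffT : ∀ i : ℕ, (h : i + 1 < k + 2) →
      (∑ j : Fin (k+2), (if i + 1 ≤ (j : ℕ) then g j else 0))
        - (∑ j : Fin (k+2), (if i + 1 + 1 ≤ (j : ℕ) then g j else 0)) = g ⟨i+1, h⟩ := by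
    intro i h
    rw [← Finset.sum_sub_distrib]
    rw [Finset.sum_eq_single (⟨i+1, h⟩ : Fin (k+2))]
    · rw [if_pos (by simp), if_neg (by simp)]
      ring
    · intro b _ hb
      have hbv : (b : ℕ) ≠ i + 1 := fun hc => hb (Fin.ext hc)
      by_cases hb2 : i + 1 + 1 ≤ (b : ℕ)
      · rw [if_pos (by omega), if_pos hb2]; ring
      · rw [if_neg (by omega), if_neg hb2]; ring
    · intro hmem; exact absurd (Finset.mem_univ _) hmem
  have hgtail : ∀ j : Fin (k+2), 2 ≤ (j : ℕ) → g j = 0 := by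
    intro j hj2
    have hjlt := j.isLt
    obtain ⟨i, hi⟩ : ∃ i, (j : ℕ) = i + 1 := ⟨(j:ℕ)-1, by omega⟩
    have h1i : 1 ≤ i := by omega
    have hik : i ≤ k := by omega
    have hji : j = ⟨i+1, by omega⟩ := Fin.ext hi
    rw [hji, ← hdiffT i (by omega), hT i h1i hik]
    rcases Nat.lt_or_ge i k with h | h
    · rw [hT (i+1) (by omega) (by omega)]; ring
    · have hik2 : i = k := by omega
      subst hik2
      rw [hTtop]; ring
  have hg1 : g ⟨1, by omega⟩ = 0 := by
    have hS0 := hS 0 (Nat.zero_le k)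
    rw [Finset.sum_eq_single (⟨1, by omega⟩ : Fin (k+2))] at hS0
    · rw [if_neg (by norm_num)] at hS0
      have ha0 : a (min 0 (1-1)) ≠ 0 := by
        simp only [ha, Nat.min_self, hn0]
        simpa using hslope0
      exact (mul_eq_zero.mp hS0).resolve_right ha0
    · intro b _ hb
      have hbv : (b : ℕ) ≠ 1 := fun hc => hb (Fin.ext hc)
      by_cases hb0 : (b : ℕ) = 0
      · rw [if_pos hb0]; ring
      · rw [hgtail b (by omega)]; ring
    · intro hmem; exact absurd (Finset.mem_univ _) hmem
  have hg0 : g ⟨0, by omega⟩ = 0 := by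
    have hE0 := hE 0 (by omega)
    rw [Finset.sum_eq_single (⟨0, by omega⟩ : Fin (k+2))] at hE0
    · simpa using hE0
    · intro b _ hb
      have hbv : (b : ℕ) ≠ 0 := fun hc => hb (Fin.ext hc)
      by_cases hb1 : (b : ℕ) = 1
      · have : b = ⟨1, by omega⟩ := Fin.ext hb1
        rw [this, hg1]; ring
      · rw [hgtail b (by omega)]; ring
    · intro hmem; exact absurd (Finset.mem_univ _) hmem
  intro j
  by_cases h0 : (j : ℕ) = 0
  · rw [show j = ⟨0, by omega⟩ from Fin.ext h0]; exact hg0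
  by_cases h1 : (j : ℕ) = 1
  · rw [show j = ⟨1, by omega⟩ from Fin.ext h1]; exact hg1
  · exact hgtail j (by omega)
end

section
/- Let I be a finite discrete interval, let V : I → ℝ be a convex sequence, and let W : I → ℝ be an arithmetic progression (affine sequence). Then there exists ε > 0 such that for all μ_1, μ_2 ∈ (−ε, ε), the sequence n ↦ e^{−V(n)} · (1 + μ_1 W(n) + μ_2 V(n)) is positive and log-concave on I, i.e., p(n)^2 ≥ p(n+1) p(n−1) for all interior points n of I, where p(n) = e^{−V(n)}(1 + μ_1 W(n) + μ_2 V(n)). -/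
set_option maxHeartbeats 1000000 in
/-- Let `I = {a,…,b}` be a finite discrete interval of integers, `V : I → ℝ`
a convex sequence and `W` an arithmetic progression. Then there exists `ε > 0` such that for
all `μ₁, μ₂ ∈ (-ε, ε)` the sequence `p n = e^{-V n} (1 + μ₁ W n + μ₂ V n)` is positive on `I`
and log-concave on `I`: `p n ^ 2 ≥ p (n+1) * p (n-1)` for all interior points `n` of `I`. -/
theorem perturbation_by_affine_and_potential_log_concave
    (a b : ℤ) (V W : ℤ → ℝ)
    (hV : ∀ n : ℤ, a ≤ n - 1 → n + 1 ≤ b → 2 * V n ≤ V (n + 1) + V (n - 1))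
    (c d : ℝ) (hW : ∀ n : ℤ, W n = c + d * (n : ℝ)) :
    ∃ ε > 0, ∀ μ₁ μ₂ : ℝ, |μ₁| < ε → |μ₂| < ε →
      (∀ n ∈ Finset.Icc a b,
        0 < Real.exp (-(V n)) * (1 + μ₁ * W n + μ₂ * V n)) ∧
      ∀ n : ℤ, a ≤ n - 1 → n + 1 ≤ b →
        Real.exp (-(V (n + 1))) * (1 + μ₁ * W (n + 1) + μ₂ * V (n + 1)) *
          (Real.exp (-(V (n - 1))) * (1 + μ₁ * W (n - 1) + μ₂ * V (n - 1))) ≤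
        (Real.exp (-(V n)) * (1 + μ₁ * W n + μ₂ * V n)) ^ 2 := by
  set K : ℝ := 1 + ∑ n ∈ Finset.Icc a b, (|W n| + |V n|) with hKdef
  have hsumnn : (0:ℝ) ≤ ∑ n ∈ Finset.Icc a b, (|W n| + |V n|) :=
    Finset.sum_nonneg fun n _ => add_nonneg (abs_nonneg _) (abs_nonneg _)
  have hK1 : (1:ℝ) ≤ K := by simp [hKdef]; linarith
  have hK0 : (0:ℝ) < K := by linarith
  have hbound : ∀ n ∈ Finset.Icc a b, |W n| + |V n| ≤ K := by
    intro n hn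
    have h : |W n| + |V n| ≤ ∑ m ∈ Finset.Icc a b, (|W m| + |V m|) :=
      Finset.single_le_sum (f := fun m => |W m| + |V m|)
        (fun m _ => add_nonneg (abs_nonneg _) (abs_nonneg _)) hn
    simp only [hKdef]; linarith
  refine ⟨1 / (100 * K), by positivity, ?_⟩
  intro μ₁ μ₂ hμ₁ hμ₂
  -- basic bounds
  have hε : (0:ℝ) < 1 / (100 * K) := by positivity
  have hs : ∀ n ∈ Finset.Icc a b, |μ₁ * W n + μ₂ * V n| ≤ 1 / 100 := by
    intro n hn
    have h1 : |μ₁ * W n + μ₂ * V n| ≤ |μ₁| * |W n| + |μ₂| * |V n| := by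
      calc |μ₁ * W n + μ₂ * V n| ≤ |μ₁ * W n| + |μ₂ * V n| := abs_add_le _ _
        _ = |μ₁| * |W n| + |μ₂| * |V n| := by rw [abs_mul, abs_mul]
    have hb := hbound n hn
    have h2 : |μ₁| * |W n| + |μ₂| * |V n| ≤ (1 / (100 * K)) * (|W n| + |V n|) := by
      have := abs_nonneg (W n); have := abs_nonneg (V n)
      nlinarith [abs_nonneg μ₁, abs_nonneg μ₂, hμ₁.le, hμ₂.le]
    have h3 : (1 / (100 * K)) * (|W n| + |V n|) ≤ 1 / 100 := by
      rw [div_mul_eq_mul_div, div_le_div_iff₀ (by positivity) (by norm_num)]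
      nlinarith
    linarith
  have hVb : ∀ n ∈ Finset.Icc a b, |V n| ≤ K := by
    intro n hn; have := hbound n hn; have := abs_nonneg (W n); linarith
  have hμ₂K : |μ₂| ≤ 1 / 100 := by
    have : 1 / (100 * K) ≤ 1 / 100 := by
      apply div_le_div_of_nonneg_left (by norm_num) (by norm_num) (by linarith)
    linarith
  have hpos : ∀ n ∈ Finset.Icc a b,
      0 < Real.exp (-(V n)) * (1 + μ₁ * W n + μ₂ * V n) := by
    intro n hn
    have := hs n hn
    have hf : (99:ℝ)/100 ≤ 1 + (μ₁ * W n + μ₂ * V n) := by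
      have := abs_le.mp this; linarith [this.1]
    have : 0 < 1 + μ₁ * W n + μ₂ * V n := by linarith
    positivity
  refine ⟨hpos, ?_⟩
  intro n hn1 hn2
  have hm0 : n ∈ Finset.Icc a b := by rw [Finset.mem_Icc]; omega
  have hmp : n + 1 ∈ Finset.Icc a b := by rw [Finset.mem_Icc]; omega
  have hmm : n - 1 ∈ Finset.Icc a b := by rw [Finset.mem_Icc]; omega
  set D : ℝ := V (n + 1) + V (n - 1) - 2 * V n with hDdef
  set s0 : ℝ := μ₁ * W n + μ₂ * V n with hs0def
  set sp : ℝ := μ₁ * W (n + 1) + μ₂ * V (n + 1) with hspdef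
  set sm : ℝ := μ₁ * W (n - 1) + μ₂ * V (n - 1) with hsmdef
  clear_value D s0 sp sm
  have hD0 : 0 ≤ D := by rw [hDdef]; linarith [hV n hn1 hn2]
  have hDle : D ≤ 4 * K := by
    have h1 := abs_le.mp (hVb _ hmp)
    have h2 := abs_le.mp (hVb _ hmm)
    have h3 := abs_le.mp (hVb _ hm0)
    rw [hDdef]; linarith
  have hs0 : -(1/100) ≤ s0 ∧ s0 ≤ 1/100 := by
    rw [hs0def]; exact abs_le.mp (hs n hm0)
  have hsp : -(1/100) ≤ sp ∧ sp ≤ 1/100 := by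
    rw [hspdef]; exact abs_le.mp (hs _ hmp)
  have hsm : -(1/100) ≤ sm ∧ sm ≤ 1/100 := by
    rw [hsmdef]; exact abs_le.mp (hs _ hmm)
  -- arithmetic progression: W(n+1)+W(n-1) = 2 W n
  have hWsum : W (n + 1) + W (n - 1) = 2 * W n := by
    rw [hW, hW, hW]; push_cast; ring
  have hssum : sp + sm = 2 * s0 + μ₂ * D := by
    rw [hspdef, hsmdef, hs0def, hDdef]; linear_combination μ₁ * hWsum
  -- key algebraic inequality
  have key : (1 + sp) * (1 + sm) ≤ (1 + D) * (1 + s0) ^ 2 := by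
    have hamgm : (1 + sp) * (1 + sm) ≤ (1 + s0 + μ₂ * D / 2) ^ 2 := by
      have hsp' : sp = 2 * s0 + μ₂ * D - sm := by linarith
      rw [hsp']
      nlinarith [sq_nonneg (s0 + μ₂ * D / 2 - sm)]
    have hμ2sq : μ₂ ^ 2 ≤ (1 / (100 * K)) ^ 2 := by
      have h := pow_le_pow_left₀ (abs_nonneg μ₂) hμ₂.le 2
      rwa [sq_abs] at h
    have hf0 : (99:ℝ)/100 ≤ 1 + s0 := by linarith [hs0.1]
    have hf0' : 1 + s0 ≤ 101/100 := by linarith [hs0.2]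
    have hμ2f : μ₂ * (1 + s0) ≤ 101 / 10000 := by
      have h1 : μ₂ * (1 + s0) ≤ |μ₂| * |1 + s0| := by
        calc μ₂ * (1 + s0) ≤ |μ₂ * (1 + s0)| := le_abs_self _
          _ = |μ₂| * |1 + s0| := abs_mul _ _
      have h2 : |1 + s0| ≤ 101 / 100 := abs_le.mpr ⟨by linarith, hf0'⟩
      have h3 : |μ₂| * |1 + s0| ≤ (1/100) * (101/100) :=
        mul_le_mul hμ₂K h2 (abs_nonneg _) (by norm_num)
      calc μ₂ * (1 + s0) ≤ |μ₂| * |1 + s0| := h1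
        _ ≤ 1 / 100 * (101 / 100) := h3
        _ = 101 / 10000 := by norm_num
    have hμ2Dsq : μ₂ ^ 2 * D / 4 ≤ 1 / 10000 := by
      have h1 : μ₂ ^ 2 * D ≤ (1 / (100 * K)) ^ 2 * (4 * K) :=
        mul_le_mul hμ2sq hDle hD0 (by positivity)
      have h2 : (1 / (100 * K)) ^ 2 * (4 * K) = 4 / (10000 * K) := by
        field_simp; ring
      have h3 : 4 / (10000 * K) ≤ 4 / 10000 := by
        apply div_le_div_of_nonneg_left (by norm_num) (by norm_num) (by linarith)
      rw [h2] at h1; linarith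
    have expand : (1 + s0 + μ₂ * D / 2) ^ 2
        = (1 + s0) ^ 2 + D * (μ₂ * (1 + s0)) + D * (μ₂ ^ 2 * D / 4) := by ring
    have e2 : (1 + D) * (1 + s0) ^ 2 = (1 + s0) ^ 2 + D * (1 + s0) ^ 2 := by ring
    have h1 : D * (μ₂ * (1 + s0)) ≤ D * (101 / 10000) :=
      mul_le_mul_of_nonneg_left hμ2f hD0
    have h2 : D * (μ₂ ^ 2 * D / 4) ≤ D * (1 / 10000) :=
      mul_le_mul_of_nonneg_left hμ2Dsq hD0
    have h3 : D * (102 / 10000) ≤ D * (1 + s0) ^ 2 :=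
      mul_le_mul_of_nonneg_left (by nlinarith) hD0
    linarith
  -- exponential part
  have hexp : Real.exp (-(V (n + 1))) * Real.exp (-(V (n - 1))) * (1 + D) ≤
      Real.exp (-(V n)) ^ 2 := by
    have h1 : (1 + D) ≤ Real.exp D := by linarith [Real.add_one_le_exp D]
    have h2 : Real.exp (-(V (n + 1))) * Real.exp (-(V (n - 1))) * Real.exp D
        = Real.exp (-(V n)) ^ 2 := by
      rw [← Real.exp_add, ← Real.exp_add, sq, ← Real.exp_add]
      congr 1; rw [hDdef]; ring
    calc Real.exp (-(V (n + 1))) * Real.exp (-(V (n - 1))) * (1 + D)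
        ≤ Real.exp (-(V (n + 1))) * Real.exp (-(V (n - 1))) * Real.exp D := by
          apply mul_le_mul_of_nonneg_left h1 (by positivity)
      _ = Real.exp (-(V n)) ^ 2 := h2
  -- combine
  have hfp : (0:ℝ) < 1 + sp := by linarith [hsp.1]
  have hfm : (0:ℝ) < 1 + sm := by linarith [hsm.1]
  have hE : (0:ℝ) < Real.exp (-(V (n + 1))) * Real.exp (-(V (n - 1))) := by positivity
  calc Real.exp (-(V (n + 1))) * (1 + μ₁ * W (n + 1) + μ₂ * V (n + 1)) *
        (Real.exp (-(V (n - 1))) * (1 + μ₁ * W (n - 1) + μ₂ * V (n - 1)))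
      = Real.exp (-(V (n + 1))) * Real.exp (-(V (n - 1))) * ((1 + sp) * (1 + sm)) := by
        rw [hspdef, hsmdef]; ring
    _ ≤ Real.exp (-(V (n + 1))) * Real.exp (-(V (n - 1))) * ((1 + D) * (1 + s0) ^ 2) := by
        apply mul_le_mul_of_nonneg_left key hE.le
    _ = Real.exp (-(V (n + 1))) * Real.exp (-(V (n - 1))) * (1 + D) * (1 + s0) ^ 2 := by ring
    _ ≤ Real.exp (-(V n)) ^ 2 * (1 + s0) ^ 2 :=
        mul_le_mul_of_nonneg_right hexp (sq_nonneg _)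
    _ = (Real.exp (-(V n)) * (1 + μ₁ * W n + μ₂ * V n)) ^ 2 := by
        rw [hs0def]; ring
end

section
/- For integers 0 ≤ k ≤ l, let f(x) = Σ_{i=k}^{l} x^i/i!. Let x_0 > 0 and suppose n_0 := x_0 · f'(x_0)/f(x_0) is a nonnegative integer. Then (1/f(x_0)) · x_0^{n_0}/n_0! ≥ e^{−n_0} · n_0^{n_0}/n_0! (with the convention 0^0 = 1); equivalently, f(x_0) ≤ (e·x_0/n_0)^{n_0} when n_0 ≥ 1. -/
/-!
Write `a i = x₀ ^ i / i!`, so that `f x₀ = ∑ a i` and `x₀ f'(x₀) = ∑ i a i = n₀ ∑ a i`. Summing the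
tangent-line bound `c ^ i ≥ c ^ n₀ (1 + (i - n₀) log c)` against the weights `a i` kills the linear
term and gives `c ^ n₀ f(x₀) ≤ ∑ a i c ^ i`. At `c = n₀ / x₀` the right side is a truncation of the
series of `exp n₀`, whence `f(x₀) (n₀ / x₀) ^ n₀ ≤ e ^ n₀`. When `n₀ = 0` every index in the support is
`0`, so `f(x₀) ≤ 1`.
-/

open Finset Real

theorem pow_mul_sum_le_sum_mul_pow (s : Finset ℕ) {a : ℕ → ℝ} (ha : ∀ i ∈ s, 0 ≤ a i)
    {c : ℝ} (hc : 0 < c) {n : ℕ} (hmean : ∑ i ∈ s, i * a i = n * ∑ i ∈ s, a i) :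
    c ^ n * ∑ i ∈ s, a i ≤ ∑ i ∈ s, a i * c ^ i := by
  -- tangent line of the convex function `t ↦ c ^ t` at `t = n`
  have tangent (i : ℕ) : c ^ n * (1 + (i - n) * log c) ≤ c ^ i := by
    have hi : c ^ i = c ^ n * exp ((i - n) * log c) := by
      rw [← rpow_natCast, ← rpow_natCast, rpow_def_of_pos hc, rpow_def_of_pos hc, ← exp_add]
      ring_nf
    rw [hi, add_comm]
    exact mul_le_mul_of_nonneg_left (add_one_le_exp _) (pow_pos hc n).le
  have centered : ∑ i ∈ s, (i - n : ℝ) * a i = 0 := by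
    simp only [sub_mul, sum_sub_distrib, ← mul_sum, hmean, sub_self]
  calc c ^ n * ∑ i ∈ s, a i
      = c ^ n * ∑ i ∈ s, a i + c ^ n * log c * ∑ i ∈ s, (i - n : ℝ) * a i := by
        rw [centered, mul_zero, add_zero]
    _ = ∑ i ∈ s, a i * (c ^ n * (1 + (i - n) * log c)) := by
        rw [mul_sum, mul_sum, ← sum_add_distrib]
        exact sum_congr rfl fun i _ => by ring
    _ ≤ ∑ i ∈ s, a i * c ^ i :=
        sum_le_sum fun i hi => mul_le_mul_of_nonneg_left (tangent i) (ha i hi)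

noncomputable def truncExp (s : Finset ℕ) (x : ℝ) : ℝ := ∑ i ∈ s, x ^ i / i.factorial

theorem truncExp_pos {s : Finset ℕ} (hs : s.Nonempty) {x : ℝ} (hx : 0 < x) :
    0 < truncExp s x :=
  sum_pos (fun i _ => by positivity) hs

theorem truncExp_le_exp (s : Finset ℕ) {x : ℝ} (hx : 0 ≤ x) : truncExp s x ≤ exp x :=
  calc truncExp s x ≤ ∑ i ∈ range (s.sup id + 1), x ^ i / i.factorial :=
        sum_le_sum_of_subset_of_nonneg
          (fun i hi => mem_range_succ_iff.2 (le_sup (f := id) hi)) fun i _ _ => by positivity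
    _ ≤ exp x := sum_le_exp_of_nonneg hx _

theorem mul_deriv_truncExp (s : Finset ℕ) (x : ℝ) :
    x * deriv (truncExp s) x = ∑ i ∈ s, i * (x ^ i / i.factorial) := by
  have hderiv : HasDerivAt (truncExp s) (∑ i ∈ s, i * x ^ (i - 1) / i.factorial) x :=
    HasDerivAt.fun_sum fun i _ => (hasDerivAt_pow i x).div_const _
  rw [hderiv.deriv, mul_sum]
  refine sum_congr rfl fun i _ => ?_
  rcases i with _ | i
  · simp
  · rw [Nat.add_sub_cancel, pow_succ]
    ring

theorem truncExp_le_one_of_sum_mul_eq_zero {s : Finset ℕ} {x : ℝ} (hx : 0 < x)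
    (h : ∑ i ∈ s, i * (x ^ i / i.factorial) = 0) : truncExp s x ≤ 1 := by
  have hs : s ⊆ {0} := fun i hi => by
    have := (sum_eq_zero_iff_of_nonneg fun i _ => by positivity).1 h i hi
    simpa [hx.ne', Nat.factorial_ne_zero] using this
  calc truncExp s x ≤ truncExp {0} x :=
        sum_le_sum_of_subset_of_nonneg hs fun i _ _ => by positivity
    _ = 1 := by simp [truncExp]

theorem truncExp_mul_pow_le {s : Finset ℕ} {x : ℝ} (hx : 0 < x) {n : ℕ}
    (hmean : ∑ i ∈ s, i * (x ^ i / i.factorial) = n * truncExp s x) :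
    truncExp s x * n ^ n ≤ exp n * x ^ n := by
  rcases n.eq_zero_or_pos with rfl | hn
  · simpa using truncExp_le_one_of_sum_mul_eq_zero hx (by simpa using hmean)
  -- at `c = n / x` the weights `x ^ i / i!` turn into `n ^ i / i!`
  have key := pow_mul_sum_le_sum_mul_pow s (fun i _ => by positivity)
    (div_pos (Nat.cast_pos.2 hn) hx) hmean
  have hterm (i : ℕ) : x ^ i / i.factorial * ((n : ℝ) / x) ^ i = (n : ℝ) ^ i / i.factorial := by
    rw [div_mul_eq_mul_div, ← mul_pow, mul_div_cancel₀ _ hx.ne']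
  simp only [hterm] at key
  calc truncExp s x * n ^ n = ((n : ℝ) / x) ^ n * truncExp s x * x ^ n := by
        rw [mul_comm _ (truncExp s x), mul_assoc, ← mul_pow, div_mul_cancel₀ _ hx.ne']
    _ ≤ exp n * x ^ n := by
        gcongr
        exact key.trans (truncExp_le_exp s n.cast_nonneg)

/-- For `0 ≤ k ≤ l` let `f x = ∑_{i=k}^{l} x^i / i!`. If `x₀ > 0` and
`n₀ = x₀ f'(x₀) / f(x₀)` is a nonnegative integer, then
`(1 / f(x₀)) · x₀^{n₀} / n₀! ≥ e^{-n₀} · n₀^{n₀} / n₀!` (with the convention `0^0 = 1`). -/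
theorem truncated_exp_prob_at_mean_ge_poisson
    (k l : ℕ) (hkl : k ≤ l)
    (f : ℝ → ℝ) (hf : f = fun x => ∑ i ∈ Finset.Icc k l, x ^ i / (Nat.factorial i : ℝ))
    (x₀ : ℝ) (hx₀ : 0 < x₀) (n₀ : ℕ)
    (hn₀ : (n₀ : ℝ) = x₀ * deriv f x₀ / f x₀) :
    Real.exp (-(n₀ : ℝ)) * (n₀ : ℝ) ^ n₀ / (n₀.factorial : ℝ) ≤
      (1 / f x₀) * x₀ ^ n₀ / (n₀.factorial : ℝ) := by
  replace hf : f = truncExp (Icc k l) := hf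
  subst hf
  have hpos : 0 < truncExp (Icc k l) x₀ := truncExp_pos (nonempty_Icc.2 hkl) hx₀
  have hmean : ∑ i ∈ Icc k l, i * (x₀ ^ i / i.factorial) = n₀ * truncExp (Icc k l) x₀ := by
    rw [← mul_deriv_truncExp, hn₀, div_mul_cancel₀ _ hpos.ne']
  have hbound := truncExp_mul_pow_le hx₀ hmean
  gcongr ?_ / _
  rw [exp_neg, ← div_eq_inv_mul, one_div_mul_eq_div, div_le_div_iff₀ (exp_pos _) hpos]
  linarith
end

section
/- For integers 0 ≤ k ≤ l with l ≥ 1 (so that f is non-constant), let f(x) = Σ_{i=k}^{l} x^i/i!. Then the function h(x) = x·(f'(x)/f(x)) − x·(f'(x)/f(x))·log(f'(x)/f(x)) − log f(x) is nonnegative for all x > 0. -/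
/-!
Put `F = f x`, `m = x f'(x) / f(x)` and let `p i = x^i / (i! F)` be the weights of the summands
of `f x`, a probability distribution on `[k, l]` with mean `m`. For any `u > 0`, Gibbs' inequality
against the Poisson weights `q i = e^{-u} u^i / i!`, whose restricted total mass is at most `1`,
gives `0 ≤ ∑ p i log (p i / q i) = m log (x / u) + u - log F`. Taking `u = m`, and using
`x / m = F / f'(x)`, this is `h x ≥ 0`.
-/

open Finset Real

theorem sub_le_mul_log_div {p q : ℝ} (hp : 0 < p) (hq : 0 < q) : p - q ≤ p * log (p / q) := by
  have h := one_sub_inv_le_log_of_pos (div_pos hp hq)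
  rw [inv_div] at h
  calc p - q = p * (1 - q / p) := by field_simp
    _ ≤ p * log (p / q) := mul_le_mul_of_nonneg_left h hp.le

theorem sum_sub_sum_le_sum_mul_log_div {ι : Type*} (s : Finset ι) {p q : ι → ℝ}
    (hp : ∀ i ∈ s, 0 < p i) (hq : ∀ i ∈ s, 0 < q i) :
    ∑ i ∈ s, p i - ∑ i ∈ s, q i ≤ ∑ i ∈ s, p i * log (p i / q i) := by
  rw [← sum_sub_distrib]
  exact sum_le_sum fun i hi => sub_le_mul_log_div (hp i hi) (hq i hi)

theorem sum_pow_div_factorial_le_exp (s : Finset ℕ) {u : ℝ} (hu : 0 ≤ u) :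
    ∑ i ∈ s, u ^ i / i.factorial ≤ exp u := by
  refine le_trans ?_ (sum_le_exp_of_nonneg hu (s.sup id + 1))
  refine sum_le_sum_of_subset_of_nonneg (fun i hi => ?_) (fun i _ _ => by positivity)
  exact mem_range.2 (Nat.lt_succ_of_le (le_sup (f := id) hi))

noncomputable def partialExp (s : Finset ℕ) (x : ℝ) : ℝ := ∑ i ∈ s, x ^ i / i.factorial

namespace partialExp

variable {s : Finset ℕ} {x : ℝ}

theorem pos (hs : s.Nonempty) (hx : 0 < x) : 0 < partialExp s x :=
  sum_pos (fun _ _ => by positivity) hs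

theorem hasDerivAt (s : Finset ℕ) (x : ℝ) :
    HasDerivAt (partialExp s) (∑ i ∈ s, (i : ℝ) * x ^ (i - 1) / i.factorial) x := by
  unfold partialExp
  refine HasDerivAt.fun_sum fun i _ => ?_
  simpa using (hasDerivAt_pow i x).div_const (i.factorial : ℝ)

theorem mul_deriv (s : Finset ℕ) (x : ℝ) :
    x * deriv (partialExp s) x = ∑ i ∈ s, (i : ℝ) * x ^ i / i.factorial := by
  rw [(hasDerivAt s x).deriv, mul_sum]
  refine sum_congr rfl fun i _ => ?_
  cases i with
  | zero => simp
  | succ n => rw [Nat.add_sub_cancel, pow_succ]; ring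

theorem mul_deriv_pos {n : ℕ} (hn : n ∈ s) (hn0 : 0 < n) (hx : 0 < x) :
    0 < x * deriv (partialExp s) x := by
  rw [mul_deriv]
  exact sum_pos' (fun _ _ => by positivity) ⟨n, hn, by positivity⟩

theorem log_le (hs : s.Nonempty) (hx : 0 < x) {u : ℝ} (hu : 0 < u) :
    log (partialExp s x) ≤ u + x * deriv (partialExp s) x / partialExp s x * log (x / u) := by
  set F := partialExp s x
  have hF : 0 < F := pos hs hx
  set p : ℕ → ℝ := fun i => x ^ i / i.factorial / F
  set q : ℕ → ℝ := fun i => u ^ i * exp (-u) / i.factorial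
  have hp_sum : ∑ i ∈ s, p i = 1 := by rw [← sum_div]; exact div_self hF.ne'
  have hq_sum : ∑ i ∈ s, q i ≤ 1 := by
    calc ∑ i ∈ s, q i = (∑ i ∈ s, u ^ i / i.factorial) * exp (-u) := by
          rw [sum_mul]; exact sum_congr rfl fun i _ => by ring
      _ ≤ exp u * exp (-u) := by gcongr; exact sum_pow_div_factorial_le_exp s hu.le
      _ = 1 := by rw [← exp_add, add_neg_cancel, exp_zero]
  have hlog_div : ∀ i, log (p i / q i) = i * log (x / u) + u - log F := by
    intro i
    have : p i / q i = (x / u) ^ i * exp u / F := by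
      simp only [p, q, div_pow, exp_neg]; field_simp
    rw [this, log_div (by positivity) hF.ne', log_mul (by positivity) (exp_pos _).ne', log_pow,
      log_exp]
  have hgibbs := sum_sub_sum_le_sum_mul_log_div s (p := p) (q := q)
    (fun _ _ => by positivity) (fun _ _ => by positivity)
  have hmean : ∑ i ∈ s, p i * log (p i / q i)
      = x * deriv (partialExp s) x / F * log (x / u) + u - log F := by
    calc ∑ i ∈ s, p i * log (p i / q i)
        = ∑ i ∈ s, (log (x / u) / F * (i * x ^ i / i.factorial) + (u - log F) * p i) :=
          sum_congr rfl fun i _ => by rw [hlog_div]; simp only [p]; ring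
      _ = log (x / u) / F * (x * deriv (partialExp s) x) + (u - log F) * ∑ i ∈ s, p i := by
          rw [sum_add_distrib, ← mul_sum, ← mul_sum, mul_deriv]
      _ = _ := by rw [hp_sum]; ring
  linarith

end partialExp

/-- For `0 ≤ k ≤ l` with `l ≥ 1`, let `f x = ∑_{i=k}^{l} x^i / i!`. Then the
function `h x = x (f'/f)(x) - x (f'/f)(x) log((f'/f)(x)) - log f(x)` is nonnegative on
`(0, ∞)`. -/
theorem h_function_nonneg
    (k l : ℕ) (hkl : k ≤ l) (hl : 1 ≤ l)
    (f : ℝ → ℝ) (hf : f = fun x => ∑ i ∈ Finset.Icc k l, x ^ i / (Nat.factorial i : ℝ)) :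
    ∀ x : ℝ, 0 < x →
      0 ≤ x * (deriv f x / f x) - x * (deriv f x / f x) * Real.log (deriv f x / f x) -
        Real.log (f x) := by
  intro x hx
  obtain rfl : f = partialExp (Icc k l) := hf
  have hl_mem : l ∈ Icc k l := mem_Icc.2 ⟨hkl, le_rfl⟩
  have hm := partialExp.mul_deriv_pos hl_mem hl hx
  have hF := partialExp.pos ⟨l, hl_mem⟩ hx
  have hbound := partialExp.log_le ⟨l, hl_mem⟩ hx (div_pos hm hF)
  set F := partialExp (Icc k l) x
  set D := deriv (partialExp (Icc k l)) x
  have hx_div : x / (x * D / F) = (D / F)⁻¹ := by field_simp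
  rw [hx_div, log_inv, mul_div_assoc] at hbound
  linarith
end

section
/- For integers 0 ≤ k ≤ l, let f(x) = Σ_{i=k}^{l} x^i/i!. Then for all x ≥ 0 one has −x·(f'(x))^2 + x·f(x)·f''(x) + f(x)·f'(x) ≥ 0. -/
/-!
With weights `w i = a i * x ^ i ≥ 0`, the Euler operator `x d/dx` turns `f`, `x f'` and `x² f''`
into `∑ w i`, `∑ i w i` and `∑ i (i - 1) w i`, so `x` times the expression is
`(∑ w i) (∑ i² w i) - (∑ i w i)²`, which is nonnegative by Cauchy–Schwarz. Equivalently, the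
expression is `f² (x f' / f)'`, and `x f' / f` is the mean of `i` under the weights `w`, whose
derivative is their variance divided by `x`.
-/

open Finset
open scoped Nat

lemma sq_sum_mul_le_sum_mul_sum_sq_mul {ι : Type*} (s : Finset ι) (c w : ι → ℝ)
    (hw : ∀ i ∈ s, 0 ≤ w i) :
    (∑ i ∈ s, c i * w i) ^ 2 ≤ (∑ i ∈ s, w i) * ∑ i ∈ s, c i ^ 2 * w i :=
  sum_sq_le_sum_mul_sum_of_sq_le_mul s hw (fun i hi => mul_nonneg (sq_nonneg _) (hw i hi))
    fun i _ => le_of_eq (by ring)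

section SumMulPow

variable (s : Finset ℕ) (a : ℕ → ℝ)

lemma hasDerivAt_sum_mul_pow (x : ℝ) :
    HasDerivAt (fun y => ∑ i ∈ s, a i * y ^ i) (∑ i ∈ s, a i * (i * x ^ (i - 1))) x :=
  HasDerivAt.fun_sum fun i _ => (hasDerivAt_pow i x).const_mul (a i)

lemma deriv_sum_mul_pow :
    deriv (fun y => ∑ i ∈ s, a i * y ^ i) = fun x => ∑ i ∈ s, a i * (i * x ^ (i - 1)) :=
  funext fun x => (hasDerivAt_sum_mul_pow s a x).deriv

lemma deriv_deriv_sum_mul_pow (x : ℝ) :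
    deriv (deriv fun y => ∑ i ∈ s, a i * y ^ i) x
      = ∑ i ∈ s, a i * (i * ((i - 1 : ℕ) * x ^ (i - 1 - 1))) := by
  rw [deriv_sum_mul_pow]
  exact (HasDerivAt.fun_sum fun i _ =>
    ((hasDerivAt_pow (i - 1) x).const_mul (i : ℝ)).const_mul (a i)).deriv

lemma mul_deriv_sum_mul_pow (x : ℝ) :
    x * deriv (fun y => ∑ i ∈ s, a i * y ^ i) x = ∑ i ∈ s, i * (a i * x ^ i) := by
  rw [deriv_sum_mul_pow, mul_sum]
  refine sum_congr rfl fun i _ => ?_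
  rcases i with _ | n
  · simp
  · simp only [Nat.add_sub_cancel, pow_succ]
    ring

lemma sq_mul_deriv_deriv_sum_mul_pow (x : ℝ) :
    x ^ 2 * deriv (deriv fun y => ∑ i ∈ s, a i * y ^ i) x
      = ∑ i ∈ s, i * (i - 1) * (a i * x ^ i) := by
  rw [deriv_deriv_sum_mul_pow, mul_sum]
  refine sum_congr rfl fun i _ => ?_
  rcases i with _ | _ | n
  · simp
  · simp
  · simp only [Nat.add_sub_cancel, pow_succ]
    push_cast
    ring

theorem deriv_ineq_of_nonneg_coeffs (ha : ∀ i ∈ s, 0 ≤ a i) {f : ℝ → ℝ}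
    (hf : f = fun y => ∑ i ∈ s, a i * y ^ i) {x : ℝ} (hx : 0 ≤ x) :
    0 ≤ -x * deriv f x ^ 2 + x * f x * deriv (deriv f) x + f x * deriv f x := by
  rcases hx.eq_or_lt with rfl | hx
  · have hf0 : 0 ≤ f 0 := by
      rw [hf]
      exact sum_nonneg fun i hi => mul_nonneg (ha i hi) (pow_nonneg le_rfl i)
    have hf'0 : 0 ≤ deriv f 0 := by
      rw [hf, deriv_sum_mul_pow]
      exact sum_nonneg fun i hi => mul_nonneg (ha i hi) (by positivity)
    simpa using mul_nonneg hf0 hf'0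
  set w := fun i => a i * x ^ i
  have hw : ∀ i ∈ s, 0 ≤ w i := fun i hi => mul_nonneg (ha i hi) (pow_nonneg hx.le i)
  have hsplit : ∑ i ∈ s, (i : ℝ) ^ 2 * w i
      = ∑ i ∈ s, i * (i - 1) * w i + ∑ i ∈ s, i * w i := by
    rw [← sum_add_distrib]
    exact sum_congr rfl fun i _ => by ring
  have hx_mul : x * (-x * deriv f x ^ 2 + x * f x * deriv (deriv f) x + f x * deriv f x)
      = (∑ i ∈ s, w i) * (∑ i ∈ s, (i : ℝ) ^ 2 * w i) - (∑ i ∈ s, i * w i) ^ 2 := by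
    have hfx : f x = ∑ i ∈ s, w i := by rw [hf]
    rw [hsplit, hfx, ← mul_deriv_sum_mul_pow, ← sq_mul_deriv_deriv_sum_mul_pow, ← hf]
    ring
  refine nonneg_of_mul_nonneg_right ?_ hx
  rw [hx_mul, sub_nonneg]
  exact sq_sum_mul_le_sum_mul_sum_sq_mul s _ w hw

end SumMulPow

theorem claim1_inequality_general
    (k l : ℕ)
    (f : ℝ → ℝ) (hf : f = fun x => ∑ i ∈ Finset.Icc k l, x ^ i / (Nat.factorial i : ℝ)) :
    ∀ x : ℝ, 0 ≤ x →
      0 ≤ -x * (deriv f x) ^ 2 + x * f x * deriv (deriv f) x + f x * deriv f x := by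
  intro x hx
  refine deriv_ineq_of_nonneg_coeffs (Icc k l) (fun i => (i ! : ℝ)⁻¹)
    (fun i _ => by positivity) (hf.trans ?_) hx
  simp only [div_eq_inv_mul]

/-- For `0 ≤ k ≤ l` let `f x = ∑_{i=k}^{l} x^i / i!`. Then for all `x ≥ 0`
one has `-x f'(x)² + x f(x) f''(x) + f(x) f'(x) ≥ 0`. -/
theorem claim1_inequality
    (k l : ℕ) (hkl : k ≤ l)
    (f : ℝ → ℝ) (hf : f = fun x => ∑ i ∈ Finset.Icc k l, x ^ i / (Nat.factorial i : ℝ)) :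
    ∀ x : ℝ, 0 ≤ x →
      0 ≤ -x * (deriv f x) ^ 2 + x * f x * deriv (deriv f) x + f x * deriv f x :=
  claim1_inequality_general k l f hf
end
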